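/- arXiv:2202.12225 — 6 statements merged into one kernel-verified Lean document; each statement's English description precedes it below -/
import Mathlib

section
/- For every integer m ≥ 0 and every permutation σ of {1,…,m}, the element w_{gl_N}(σ) belongs to the center of the universal enveloping algebra U(gl_N); that is, w_{gl_N}(σ)·u = u·w_{gl_N}(σ) for every u ∈ U(gl_N). -/
open scoped BigOperators

attribute [local instance 100] LieRing.ofAssociativeRing

/-- The Lie algebra `gl_N` of `N × N` complex matrices (with bracket `[x,y] = x*y - y*x`). -/
abbrev gl (N : ℕ) := Matrix (Fin N) (Fin N) ℂ

/-- The canonical embedding of `gl_N` into its universal enveloping algebra. -/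
noncomputable def ιgl (N : ℕ) (x : gl N) : UniversalEnvelopingAlgebra ℂ (gl N) :=
  UniversalEnvelopingAlgebra.ι ℂ x

/-- The matrix unit `E_{ij}`. -/
def E {N : ℕ} (i j : Fin N) : gl N := Matrix.single i j (1 : ℂ)

/-- The value of the `gl_N` invariant on a permutation `σ` of `{1, …, m}`:
`w_{gl_N}(σ) = Σ_{i : {1,…,m} → {1,…,N}} ι(E_{i(1) i(σ(1))}) ⋯ ι(E_{i(m) i(σ(m))})`,
the product taken in increasing order of positions. -/
noncomputable def wgl (N m : ℕ) (σ : Equiv.Perm (Fin m)) :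
    UniversalEnvelopingAlgebra ℂ (gl N) :=
  ∑ i : Fin m → Fin N, (List.ofFn fun t : Fin m => ιgl N (E (i t) (i (σ t)))).prod


lemma ofFn_update {α : Type*} {m : ℕ} (f : Fin m → α) (t : Fin m) (c : α) :
    List.ofFn (Function.update f t c) = (List.ofFn f).set t c := by
  apply List.ext_getElem
  · simp
  · intro i h1 h2
    have hi : i < m := by simpa using h1
    simp only [List.getElem_ofFn, List.getElem_set, Function.update_apply]
    by_cases h : (⟨i, hi⟩ : Fin m) = t
    · have h' : (t : ℕ) = i := by rw [← h]
      simp [h, h']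
    · have h' : ¬ ((t : ℕ) = i) := by
        intro hc; exact h (by ext; simp [hc.symm])
      simp [h, h']

lemma prod_update {A : Type*} [Ring A] {m : ℕ} (f : Fin m → A) (t : Fin m) (c : A) :
    (List.ofFn (Function.update f t c)).prod
      = ((List.ofFn f).take t).prod * c * ((List.ofFn f).drop (t + 1)).prod := by
  rw [ofFn_update, List.prod_set]
  simp [t.isLt]

lemma prod_update_sub {A : Type*} [Ring A] {m : ℕ} (f : Fin m → A) (t : Fin m) (u v : A) :
    (List.ofFn (Function.update f t (u - v))).prod
      = (List.ofFn (Function.update f t u)).prod - (List.ofFn (Function.update f t v)).prod := by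
  rw [prod_update, prod_update, prod_update]
  noncomm_ring

lemma prod_update_ite {A : Type*} [Ring A] {m : ℕ} (f : Fin m → A) (t : Fin m)
    (c : Prop) [Decidable c] (u : A) :
    (List.ofFn (Function.update f t (if c then u else 0))).prod
      = if c then (List.ofFn (Function.update f t u)).prod else 0 := by
  split_ifs with h
  · rfl
  · rw [prod_update]; simp

lemma leibniz {A : Type*} [Ring A] :
    ∀ {m : ℕ} (f : Fin m → A) (X : A),
      X * (List.ofFn f).prod - (List.ofFn f).prod * X
        = ∑ t : Fin m, (List.ofFn (Function.update f t (X * f t - f t * X))).prod := by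
  intro m
  induction m with
  | zero => intro f X; simp
  | succ n ih =>
    intro f X
    have h0 : List.ofFn (Function.update f 0 (X * f 0 - f 0 * X))
        = (X * f 0 - f 0 * X) :: List.ofFn (fun s : Fin n => f s.succ) := by
      rw [List.ofFn_succ]
      have e1 : Function.update f 0 (X * f 0 - f 0 * X) 0 = X * f 0 - f 0 * X := by simp
      have e2 : (fun s : Fin n => Function.update f 0 (X * f 0 - f 0 * X) s.succ)
          = fun s : Fin n => f s.succ := by
        funext s
        rw [Function.update_of_ne (Fin.succ_ne_zero s)]
      rw [e1, e2]
    have hsucc : ∀ (t : Fin n) (c : A),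
        List.ofFn (Function.update f t.succ c)
          = f 0 :: List.ofFn (Function.update (fun s : Fin n => f s.succ) t c) := by
      intro t c
      rw [List.ofFn_succ]
      have e1 : Function.update f t.succ c 0 = f 0 :=
        Function.update_of_ne (Fin.succ_ne_zero t).symm c f
      have e2 : (fun s : Fin n => Function.update f t.succ c s.succ)
          = Function.update (fun s : Fin n => f s.succ) t c := by
        funext s
        simp [Function.update_apply, Fin.succ_inj]
      rw [e1, e2]
    rw [Fin.sum_univ_succ]
    calc X * (List.ofFn f).prod - (List.ofFn f).prod * X
        = X * (f 0 * (List.ofFn (fun s : Fin n => f s.succ)).prod)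
            - (f 0 * (List.ofFn (fun s : Fin n => f s.succ)).prod) * X := by
          rw [List.ofFn_succ, List.prod_cons]
      _ = (X * f 0 - f 0 * X) * (List.ofFn (fun s : Fin n => f s.succ)).prod
            + f 0 * (X * (List.ofFn (fun s : Fin n => f s.succ)).prod
                - (List.ofFn (fun s : Fin n => f s.succ)).prod * X) := by noncomm_ring
      _ = (List.ofFn (Function.update f 0 (X * f 0 - f 0 * X))).prod
            + ∑ t : Fin n,
                (List.ofFn (Function.update f t.succ (X * f t.succ - f t.succ * X))).prod := by
          rw [ih (fun s : Fin n => f s.succ) X, Finset.mul_sum, h0, List.prod_cons]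
          congr 1
          refine Finset.sum_congr rfl fun t _ => ?_
          rw [hsucc t (X * f t.succ - f t.succ * X), List.prod_cons]

lemma iotagl_comm {N : ℕ} (x y : gl N) :
    ιgl N x * ιgl N y - ιgl N y * ιgl N x = ιgl N (x * y - y * x) := by
  have h := (UniversalEnvelopingAlgebra.ι ℂ (L := gl N)).map_lie x y
  simp only [Ring.lie_def] at h
  simpa [ιgl, Ring.lie_def, LieRing.of_associative_ring_bracket] using h.symm

lemma E_mul {N : ℕ} (a b c d : Fin N) : (E a b * E c d : gl N) = if b = c then E a d else 0 := by
  by_cases h : b = c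
  · subst h; simp [E, Matrix.single_mul_single_same]
  · simp [E, h]

lemma iota_map_sub {N : ℕ} (x y : gl N) : ιgl N (x - y) = ιgl N x - ιgl N y := by
  simp [ιgl]

lemma iota_map_zero {N : ℕ} : ιgl N (0 : gl N) = 0 := by simp [ιgl]

/- core combinatorics -/

noncomputable def fI (N : ℕ) {m : ℕ} (σ : Equiv.Perm (Fin m)) (i : Fin m → Fin N) :
    Fin m → UniversalEnvelopingAlgebra ℂ (gl N) :=
  fun s => ιgl N (E (i s) (i (σ s)))

noncomputable def termA (N : ℕ) {m : ℕ} (σ : Equiv.Perm (Fin m)) (a : Fin N)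
    (t : Fin m) (i : Fin m → Fin N) : UniversalEnvelopingAlgebra ℂ (gl N) :=
  (List.ofFn (Function.update (fI N σ i) t (ιgl N (E a (i (σ t)))))).prod

noncomputable def termB (N : ℕ) {m : ℕ} (σ : Equiv.Perm (Fin m)) (b : Fin N)
    (t : Fin m) (i : Fin m → Fin N) : UniversalEnvelopingAlgebra ℂ (gl N) :=
  (List.ofFn (Function.update (fI N σ i) t (ιgl N (E (i t) b)))).prod

lemma comm_term {N m : ℕ} (σ : Equiv.Perm (Fin m)) (a b : Fin N) (i : Fin m → Fin N) :
    ιgl N (E a b) * (List.ofFn (fI N σ i)).prod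
        - (List.ofFn (fI N σ i)).prod * ιgl N (E a b)
      = ∑ t : Fin m, ((if b = i t then termA N σ a t i else 0)
          - (if i (σ t) = a then termB N σ b t i else 0)) := by
  rw [leibniz]
  refine Finset.sum_congr rfl fun t _ => ?_
  have hcomm : ιgl N (E a b) * fI N σ i t - fI N σ i t * ιgl N (E a b)
      = (if b = i t then ιgl N (E a (i (σ t))) else 0)
          - (if i (σ t) = a then ιgl N (E (i t) b) else 0) := by
    show ιgl N (E a b) * ιgl N (E (i t) (i (σ t)))
        - ιgl N (E (i t) (i (σ t))) * ιgl N (E a b) = _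
    rw [iotagl_comm, E_mul, E_mul, iota_map_sub,
      apply_ite (ιgl N), apply_ite (ιgl N), iota_map_zero]
  rw [hcomm, prod_update_sub, prod_update_ite, prod_update_ite]
  rfl

lemma key_exchange {N m : ℕ} (σ : Equiv.Perm (Fin m)) (a b : Fin N) :
    ∑ t : Fin m, ∑ i : Fin m → Fin N, (if b = i t then termA N σ a t i else 0)
      = ∑ t : Fin m, ∑ i : Fin m → Fin N, (if i (σ t) = a then termB N σ b t i else 0) := by
  rw [← Equiv.sum_comp σ.symm
    (fun t => ∑ i : Fin m → Fin N, (if i (σ t) = a then termB N σ b t i else 0))]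
  simp only [Equiv.apply_symm_apply]
  refine Finset.sum_congr rfl fun t _ => ?_
  have hinv : Function.Involutive
      (fun i : Fin m → Fin N => Function.update i t (Equiv.swap a b (i t))) := by
    intro i
    funext s
    by_cases hs : s = t
    · subst hs
      simp [Equiv.swap_apply_self]
    · simp [Function.update_of_ne hs]
  set e := hinv.toPerm _ with he_def
  refine Fintype.sum_equiv e _ _ fun i => ?_
  have he : e i = Function.update i t (Equiv.swap a b (i t)) := rfl
  have heit : e i t = Equiv.swap a b (i t) := by rw [he, Function.update_self]
  by_cases hb : i t = b
  · have hjt : e i t = a := by rw [heit, hb, Equiv.swap_apply_right]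
    have hj : e i = Function.update i t a := by
      rw [he, hb, Equiv.swap_apply_right]
    rw [if_pos hb.symm, if_pos hjt]
    show termA N σ a t i = termB N σ b (σ.symm t) (e i)
    rw [termA, termB]
    congr 1
    rw [hj]
    congr 1
    funext s
    rw [Function.update_apply, Function.update_apply]
    by_cases hs : s = t <;> by_cases hs' : s = σ.symm t
    · -- s = t and σ t = t
      subst hs
      have ht' : σ s = s := by
        conv_lhs => rw [hs']
        simp
      rw [if_pos rfl, if_pos hs']
      rw [← hs', Function.update_self, ht', hb]
    · -- s = t, σ t ≠ t
      subst hs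
      rw [if_pos rfl, if_neg hs']
      show ιgl N (E a (i (σ s)))
          = ιgl N (E (Function.update i s a s) (Function.update i s a (σ s)))
      have hst : σ s ≠ s := by
        intro hc
        have h2 : (Equiv.symm σ) s = s := by
          conv_lhs => rw [← hc]
          simp
        exact hs' h2.symm
      rw [Function.update_self, Function.update_of_ne hst]
    · -- s ≠ t, s = σ.symm t
      rw [if_neg hs, if_pos hs']
      show ιgl N (E (i s) (i (σ s))) = ιgl N (E (Function.update i t a (σ.symm t)) b)
      have hσs : σ s = t := by rw [hs']; simp
      rw [hσs, hb, ← hs', Function.update_of_ne hs]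
    · -- s ≠ t, s ≠ σ.symm t
      rw [if_neg hs, if_neg hs']
      show ιgl N (E (i s) (i (σ s)))
          = ιgl N (E (Function.update i t a s) (Function.update i t a (σ s)))
      have hσs : σ s ≠ t := by
        intro hc
        exact hs' (by rw [← hc]; simp)
      rw [Function.update_of_ne hs, Function.update_of_ne hσs]
  · have h1 : ¬ (b = i t) := fun hc => hb hc.symm
    have h2 : ¬ (e i t = a) := by
      rw [heit]
      intro hc
      apply hb
      have := congrArg (Equiv.swap a b) hc
      rw [Equiv.swap_apply_self, Equiv.swap_apply_left] at this
      exact this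
    rw [if_neg h1, if_neg h2]

lemma wgl_comm_E {N m : ℕ} (σ : Equiv.Perm (Fin m)) (a b : Fin N) :
    ιgl N (E a b) * wgl N m σ = wgl N m σ * ιgl N (E a b) := by
  rw [← sub_eq_zero, wgl, Finset.mul_sum, Finset.sum_mul, ← Finset.sum_sub_distrib]
  have hP : ∀ i : Fin m → Fin N,
      (List.ofFn fun t : Fin m => ιgl N (E (i t) (i (σ t)))) = List.ofFn (fI N σ i) :=
    fun _ => rfl
  calc (∑ i : Fin m → Fin N,
          (ιgl N (E a b) * (List.ofFn fun t : Fin m => ιgl N (E (i t) (i (σ t)))).prod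
            - (List.ofFn fun t : Fin m => ιgl N (E (i t) (i (σ t)))).prod * ιgl N (E a b)))
      = ∑ i : Fin m → Fin N, ∑ t : Fin m,
          ((if b = i t then termA N σ a t i else 0)
            - (if i (σ t) = a then termB N σ b t i else 0)) := by
        refine Finset.sum_congr rfl fun i _ => ?_
        rw [hP i]
        exact comm_term σ a b i
    _ = (∑ t : Fin m, ∑ i : Fin m → Fin N, (if b = i t then termA N σ a t i else 0))
          - (∑ t : Fin m, ∑ i : Fin m → Fin N, (if i (σ t) = a then termB N σ b t i else 0)) := by
        simp only [Finset.sum_sub_distrib]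
        rw [Finset.sum_comm, Finset.sum_comm (γ := Fin m → Fin N)]
    _ = 0 := by rw [key_exchange σ a b, sub_self]

lemma central_of_comm_iota {N : ℕ} (z : UniversalEnvelopingAlgebra ℂ (gl N))
    (h : ∀ x : gl N, ιgl N x * z = z * ιgl N x)
    (u : UniversalEnvelopingAlgebra ℂ (gl N)) : z * u = u * z := by
  have hsurj : Function.Surjective (UniversalEnvelopingAlgebra.mkAlgHom ℂ (gl N)) :=
    RingCon.mkₐ_surjective (α := ℂ) _
  obtain ⟨v, rfl⟩ := hsurj u
  induction v using TensorAlgebra.induction with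
  | algebraMap r => rw [AlgHom.commutes]; exact (Algebra.commutes r z).symm
  | ι x =>
      have hx := h x
      rw [ιgl, UniversalEnvelopingAlgebra.ι_apply] at hx
      exact hx.symm
  | mul a b ha hb => rw [map_mul, ← mul_assoc, ha, mul_assoc, hb, mul_assoc]
  | add a b ha hb => rw [map_add, mul_add, add_mul, ha, hb]

lemma iota_E_expand {N : ℕ} (x : gl N) :
    ιgl N x = ∑ a : Fin N, ∑ b : Fin N, x a b • ιgl N (E a b) := by
  have hx : x = ∑ a : Fin N, ∑ b : Fin N, x a b • E a b := by
    conv_lhs => rw [Matrix.matrix_eq_sum_single x]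
    refine Finset.sum_congr rfl fun a _ => Finset.sum_congr rfl fun b _ => ?_
    rw [E, Matrix.smul_single, smul_eq_mul, mul_one]
  have hlin : ιgl N x = (UniversalEnvelopingAlgebra.ι ℂ (L := gl N)).toLinearMap x := rfl
  conv_lhs => rw [hlin, hx]
  rw [map_sum]
  refine Finset.sum_congr rfl fun a _ => ?_
  rw [map_sum]
  refine Finset.sum_congr rfl fun b _ => ?_
  rw [map_smul]
  rfl

/-- `w_{gl_N}(σ)` lies in the center of `U(gl_N)`. -/
theorem wgl_central (N : ℕ) (hN : 1 ≤ N) (m : ℕ) (σ : Equiv.Perm (Fin m))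
    (u : UniversalEnvelopingAlgebra ℂ (gl N)) :
    wgl N m σ * u = u * wgl N m σ := by
  have hE : ∀ x : gl N, ιgl N x * wgl N m σ = wgl N m σ * ιgl N x := by
    intro x
    rw [iota_E_expand x, Finset.sum_mul, Finset.mul_sum]
    refine Finset.sum_congr rfl fun p _ => ?_
    rw [Finset.sum_mul, Finset.mul_sum]
    refine Finset.sum_congr rfl fun q _ => ?_
    rw [smul_mul_assoc, mul_smul_comm, wgl_comm_E]
  exact central_of_comm_iota (wgl N m σ) hE u
end

section
/- For every integer m ≥ 1 and every permutation σ of {1,…,m}, w_{gl_N}(σ) is invariant under conjugation by the cyclic shift: w_{gl_N}(σ) = w_{gl_N}(c⁻¹∘σ∘c), where c is the cyclic permutation 1↦2↦⋯↦m↦1. Equivalently, w_{gl_N}(σ) = Σ_{i : {1,…,m} → {1,…,N}} ι(E_{i(2) i(σ(2))})·⋯·ι(E_{i(m) i(σ(m))})·ι(E_{i(1) i(σ(1))}). -/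
open scoped BigOperators

attribute [local instance 100] LieRing.ofAssociativeRing

theorem iota_comm {N : ℕ} (x y : gl N) :
    ιgl N x * ιgl N y = ιgl N y * ιgl N x + ιgl N ⁅x, y⁆ := by
  have h := (UniversalEnvelopingAlgebra.ι ℂ (L := gl N)).map_lie x y
  simp only [ιgl, Ring.lie_def]
  rw [Ring.lie_def] at h
  rw [h, Ring.lie_def]
  abel

theorem bracketE {N : ℕ} (a b c d : Fin N) :
    ⁅E a b, E c d⁆ = (if b = c then E a d else 0) - (if d = a then E c b else 0) := by
  rw [Ring.lie_def]
  by_cases h1 : b = c <;> by_cases h2 : d = a <;>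
    simp [E, h1, h2, Matrix.single_mul_single_same, Matrix.single_mul_single_of_ne]

noncomputable def Pr {N : ℕ} {n : ℕ} (v : Fin n → gl N) : UniversalEnvelopingAlgebra ℂ (gl N) :=
  (List.ofFn fun t => ιgl N (v t)).prod

theorem Pr_succ {N n : ℕ} (v : Fin (n+1) → gl N) :
    Pr v = ιgl N (v 0) * Pr (v ∘ Fin.succ) := by
  rw [Pr, List.ofFn_succ, List.prod_cons]; rfl

theorem update_comp_succ {α : Type*} {n : ℕ} (v : Fin (n+1) → α) (s : Fin n) (w : α) :
    Function.update v s.succ w ∘ Fin.succ = Function.update (v ∘ Fin.succ) s w :=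
  Function.update_comp_eq_of_injective v (Fin.succ_injective n) s w

theorem stepA {N : ℕ} : ∀ {n : ℕ} (x : gl N) (v : Fin n → gl N),
    ιgl N x * Pr v = Pr v * ιgl N x + ∑ s : Fin n, Pr (Function.update v s ⁅x, v s⁆) := by
  intro n
  induction n with
  | zero => intro x v; simp [Pr]
  | succ n ih =>
    intro x v
    rw [Pr_succ, ← mul_assoc, iota_comm, add_mul, mul_assoc, ih x (v ∘ Fin.succ),
      Fin.sum_univ_succ]
    have h0 : Pr (Function.update v 0 ⁅x, v 0⁆) = ιgl N ⁅x, v 0⁆ * Pr (v ∘ Fin.succ) := by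
      rw [Pr_succ, Function.update_self]
      congr 1

    have hs : ∀ s : Fin n, Pr (Function.update v s.succ ⁅x, v s.succ⁆)
        = ιgl N (v 0) * Pr (Function.update (v ∘ Fin.succ) s ⁅x, (v ∘ Fin.succ) s⁆) := by
      intro s
      rw [Pr_succ, update_comp_succ, Function.update_of_ne (Fin.succ_ne_zero s).symm]
      rfl
    rw [h0]
    simp only [hs]
    rw [mul_add, Finset.mul_sum, ← mul_assoc]
    abel

theorem Pr_update_eq {N : ℕ} : ∀ {n : ℕ} (v : Fin n → gl N) (s : Fin n),
    ∃ x y : UniversalEnvelopingAlgebra ℂ (gl N),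
      ∀ a : gl N, Pr (Function.update v s a) = x * ιgl N a * y := by
  intro n
  induction n with
  | zero => exact fun v s => s.elim0
  | succ n ih =>
    intro v s
    refine Fin.cases ?_ ?_ s
    · exact ⟨1, Pr (v ∘ Fin.succ), fun a => by
        rw [Pr_succ, Function.update_self, one_mul]
        congr 1⟩
    · intro s
      obtain ⟨x, y, hxy⟩ := ih (v ∘ Fin.succ) s
      exact ⟨ιgl N (v 0) * x, y, fun a => by
        rw [Pr_succ, update_comp_succ, Function.update_of_ne (Fin.succ_ne_zero s).symm,
          hxy a, mul_assoc, mul_assoc, mul_assoc]⟩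

theorem Pr_update_sub {N n : ℕ} (v : Fin n → gl N) (s : Fin n) (a b : gl N) :
    Pr (Function.update v s (a - b))
      = Pr (Function.update v s a) - Pr (Function.update v s b) := by
  obtain ⟨x, y, hxy⟩ := Pr_update_eq v s
  rw [hxy, hxy, hxy]
  have hms : UniversalEnvelopingAlgebra.ι ℂ (a - b)
      = UniversalEnvelopingAlgebra.ι ℂ (L := gl N) a - UniversalEnvelopingAlgebra.ι ℂ b :=
    map_sub _ a b
  simp only [ιgl, hms, mul_sub, sub_mul]

theorem Pr_update_ite {N n : ℕ} (v : Fin n → gl N) (s : Fin n) (c : Prop) [Decidable c]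
    (a : gl N) :
    Pr (Function.update v s (if c then a else 0))
      = if c then Pr (Function.update v s a) else 0 := by
  obtain ⟨x, y, hxy⟩ := Pr_update_eq v s
  by_cases h : c <;> simp [h, hxy]
  simp [ιgl]

variable {n : ℕ}

/-- contraction of `σ⁻¹` at `0`, as a map on the positions `1..n` (encoded as `Fin n`). -/
def cs (σ : Equiv.Perm (Fin (n+1))) (s : Fin n) : Fin n :=
  if h : s.succ = σ 0 then
    (σ.symm 0).pred (fun h0 => Fin.succ_ne_zero s (by
      rw [h]; nth_rewrite 1 [← h0]; exact σ.apply_symm_apply 0))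
  else
    (σ.symm s.succ).pred (fun h0 => h (by
      rw [(Equiv.symm_apply_eq σ).mp h0]))

/-- contraction of `σ` at `0`. -/
def cs' (σ : Equiv.Perm (Fin (n+1))) (u : Fin n) : Fin n :=
  if h : u.succ = σ.symm 0 then
    (σ 0).pred (fun h0 => Fin.succ_ne_zero u (by
      rw [h, (Equiv.symm_apply_eq σ).mpr h0.symm]))
  else
    (σ u.succ).pred (fun h0 => h ((Equiv.eq_symm_apply σ).mpr h0))

theorem cs_succ (σ : Equiv.Perm (Fin (n+1))) (s : Fin n) :
    (cs σ s).succ = if s.succ = σ 0 then σ.symm 0 else σ.symm s.succ := by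
  unfold cs; split <;> simp [Fin.succ_pred]

theorem cs'_succ (σ : Equiv.Perm (Fin (n+1))) (u : Fin n) :
    (cs' σ u).succ = if u.succ = σ.symm 0 then σ 0 else σ u.succ := by
  unfold cs'; split <;> simp [Fin.succ_pred]

theorem cs'_cs (σ : Equiv.Perm (Fin (n+1))) (s : Fin n) : cs' σ (cs σ s) = s := by
  apply Fin.succ_injective
  rw [cs'_succ, cs_succ]
  by_cases h : s.succ = σ 0
  · simp [h]
  · rw [if_neg h, if_neg (fun h2 => Fin.succ_ne_zero s (σ.symm.injective h2)),
      Equiv.apply_symm_apply]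

theorem cs_cs' (σ : Equiv.Perm (Fin (n+1))) (u : Fin n) : cs σ (cs' σ u) = u := by
  apply Fin.succ_injective
  rw [cs_succ, cs'_succ]
  by_cases h : u.succ = σ.symm 0
  · simp [h]
  · rw [if_neg h, if_neg (fun h2 => Fin.succ_ne_zero u (σ.injective h2)),
      Equiv.symm_apply_apply]

theorem cs_bijective (σ : Equiv.Perm (Fin (n+1))) : Function.Bijective (cs σ) :=
  Function.bijective_iff_has_inverse.mpr ⟨cs' σ, cs'_cs σ, cs_cs' σ⟩

theorem perS (N : ℕ) {n : ℕ} (σ : Equiv.Perm (Fin (n+1))) (s : Fin n) :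
    (∑ i : Fin (n+1) → Fin N, if i (σ 0) = i s.succ then
      Pr (Function.update (fun t : Fin n => E (i t.succ) (i (σ t.succ))) s
        (E (i 0) (i (σ s.succ)))) else 0)
    = ∑ i : Fin (n+1) → Fin N, if i (σ (cs σ s).succ) = i 0 then
      Pr (Function.update (fun t : Fin n => E (i t.succ) (i (σ t.succ))) (cs σ s)
        (E (i (cs σ s).succ) (i (σ 0)))) else 0 := by
  by_cases hdeg : s.succ = σ 0
  · -- degenerate case : both conditions trivial, bijection i ↦ i ∘ swap 0 (σ 0)
    have hcs : (cs σ s).succ = σ.symm 0 := by rw [cs_succ, if_pos hdeg]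
    have hσ0 : σ 0 ≠ 0 := fun h => Fin.succ_ne_zero s (hdeg.trans h)
    have hφ : Function.Bijective
        (fun (i : Fin (n+1) → Fin N) (u : Fin (n+1)) => i (Equiv.swap 0 (σ 0) u)) := by
      apply Function.bijective_iff_has_inverse.mpr
      refine ⟨fun i u => i (Equiv.swap 0 (σ 0) u), fun i => ?_, fun i => ?_⟩ <;>
        · funext u; simp [Equiv.swap_apply_self]
    refine Fintype.sum_bijective _ hφ _ _ (fun i => ?_)
    have hcond1 : i (σ 0) = i s.succ := by rw [hdeg]
    set j : Fin (n+1) → Fin N := fun u => i (Equiv.swap 0 (σ 0) u) with hj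
    have hjval : ∀ u, j u = i (Equiv.swap (0 : Fin (n+1)) (σ 0) u) := fun u => rfl
    rw [if_pos hcond1,
      if_pos (show j (σ (cs σ s).succ) = j 0 by rw [hcs, Equiv.apply_symm_apply])]
    have hj0 : ∀ u, u = σ 0 → j u = i 0 := fun u hu => by
      rw [hjval, hu, Equiv.swap_apply_right]
    have hjother : ∀ u, u ≠ 0 → u ≠ σ 0 → j u = i u := fun u h1 h2 => by
      rw [hjval, Equiv.swap_apply_of_ne_of_ne h1 h2]
    have hssucc : σ.symm 0 ≠ 0 := fun h => hσ0 ((Equiv.symm_apply_eq σ).mp h).symm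
    congr 1
    funext t
    by_cases ht1 : t = s
    · subst ht1
      by_cases ht2 : t = cs σ t
      · rw [Function.update_self, ← ht2, Function.update_self]
        have h1 : σ 0 = σ.symm 0 := by rw [← hdeg, ← hcs, ← ht2]
        have hss : σ t.succ = 0 := by rw [hdeg, h1, Equiv.apply_symm_apply]
        rw [hss, hj0 _ hdeg, hj0 _ rfl]
      · rw [Function.update_self, Function.update_of_ne ht2]
        have hne0 : σ t.succ ≠ 0 := fun h => ht2 (Fin.succ_injective _ (by
          rw [hcs, ← h, Equiv.symm_apply_apply]))
        have hneσ0 : σ t.succ ≠ σ 0 := fun h => Fin.succ_ne_zero t (σ.injective h)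
        rw [hj0 _ hdeg, hjother _ hne0 hneσ0]
    · by_cases ht2 : t = cs σ s
      · rw [Function.update_of_ne ht1, ht2, Function.update_self]
        have hcol : σ (cs σ s).succ = 0 := by rw [hcs, Equiv.apply_symm_apply]
        have hrow : j (cs σ s).succ = i (cs σ s).succ := by
          apply hjother
          · rw [hcs]; exact hssucc
          · rw [hcs]; intro h
            exact ht1 (ht2.trans (Fin.succ_injective _ (by rw [hcs, h, ← hdeg])))
        rw [hcol, hrow, hj0 _ rfl]
      · rw [Function.update_of_ne ht1, Function.update_of_ne ht2]
        have h1 : j t.succ = i t.succ := hjother _ (Fin.succ_ne_zero t)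
          (fun h => ht1 (Fin.succ_injective _ (h.trans hdeg.symm)))
        have h2 : j (σ t.succ) = i (σ t.succ) := hjother _
          (fun h => ht2 (Fin.succ_injective _ (by rw [hcs, ← h, Equiv.symm_apply_apply])))
          (fun h => Fin.succ_ne_zero t (σ.injective h))
        rw [h1, h2]
  · -- non-degenerate case : bijection i ↦ update i s.succ (i 0)
    have hcs : (cs σ s).succ = σ.symm s.succ := by rw [cs_succ, if_neg hdeg]
    have hσs' : σ (cs σ s).succ = s.succ := by rw [hcs, Equiv.apply_symm_apply]
    have hσ0ne : σ 0 ≠ s.succ := fun h => hdeg h.symm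
    have hzne : (0 : Fin (n+1)) ≠ s.succ := Ne.symm (Fin.succ_ne_zero s)
    have hne1 : ∀ t : Fin n, t ≠ cs σ s → σ t.succ ≠ s.succ := fun t h hh =>
      h (Fin.succ_injective _ (by rw [hcs, ← hh, Equiv.symm_apply_apply]))
    rw [← Finset.sum_filter, ← Finset.sum_filter]
    refine Finset.sum_nbij' (fun i => Function.update i s.succ (i 0))
      (fun i' => Function.update i' s.succ (i' (σ 0))) ?_ ?_ ?_ ?_ ?_
    · intro a _
      simp only [Finset.mem_filter, Finset.mem_univ, true_and]
      rw [hσs', Function.update_self, Function.update_of_ne hzne]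
    · intro a _
      simp only [Finset.mem_filter, Finset.mem_univ, true_and]
      rw [Function.update_of_ne hσ0ne, Function.update_self]
    · intro a ha
      simp only [Finset.mem_filter, Finset.mem_univ, true_and] at ha
      beta_reduce
      rw [Function.update_of_ne hσ0ne, ha, Function.update_idem, Function.update_eq_self]
    · intro a ha
      simp only [Finset.mem_filter, Finset.mem_univ, true_and] at ha
      rw [hσs'] at ha
      beta_reduce
      rw [Function.update_of_ne hzne, ← ha, Function.update_idem, Function.update_eq_self]
    · intro a ha
      simp only [Finset.mem_filter, Finset.mem_univ, true_and] at ha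
      beta_reduce
      set j := Function.update a s.succ (a 0) with hjdef
      have hjs : j s.succ = a 0 := Function.update_self _ _ _
      have hjother : ∀ u, u ≠ s.succ → j u = a u := fun u h => Function.update_of_ne h _ _
      congr 1
      funext t
      by_cases ht1 : t = s
      · subst ht1
        by_cases ht2 : t = cs σ t
        · rw [Function.update_self, ← ht2, Function.update_self]
          have hfix : σ t.succ = t.succ := by
            nth_rewrite 1 [show t.succ = σ.symm t.succ by rw [← hcs, ← ht2]]
            rw [Equiv.apply_symm_apply]
          rw [hfix, hjs, hjother _ hσ0ne, ha]
        · rw [Function.update_self, Function.update_of_ne ht2]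
          rw [hjs, hjother _ (hne1 _ ht2)]
      · by_cases ht2 : t = cs σ s
        · rw [Function.update_of_ne ht1, ht2, Function.update_self]
          have hts : t.succ ≠ s.succ := fun h => ht1 (Fin.succ_injective _ h)
          rw [ht2] at hts
          rw [hσs', hjother _ hts, hjother _ hσ0ne, ha]
        · rw [Function.update_of_ne ht1, Function.update_of_ne ht2]
          have hts : t.succ ≠ s.succ := fun h => ht1 (Fin.succ_injective _ h)
          rw [hjother _ hts, hjother _ (hne1 _ ht2)]

theorem key (N : ℕ) {n : ℕ} (σ : Equiv.Perm (Fin (n+1))) :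
    ∑ i : Fin (n+1) → Fin N,
      ιgl N (E (i 0) (i (σ 0))) * Pr (fun t : Fin n => E (i t.succ) (i (σ t.succ)))
    = ∑ i : Fin (n+1) → Fin N,
      Pr (fun t : Fin n => E (i t.succ) (i (σ t.succ))) * ιgl N (E (i 0) (i (σ 0))) := by
  have expand : ∀ i : Fin (n+1) → Fin N,
      ιgl N (E (i 0) (i (σ 0))) * Pr (fun t : Fin n => E (i t.succ) (i (σ t.succ)))
      = Pr (fun t : Fin n => E (i t.succ) (i (σ t.succ))) * ιgl N (E (i 0) (i (σ 0)))
        + ∑ s : Fin n,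
          ((if i (σ 0) = i s.succ then
            Pr (Function.update (fun t : Fin n => E (i t.succ) (i (σ t.succ))) s
              (E (i 0) (i (σ s.succ)))) else 0)
          - (if i (σ s.succ) = i 0 then
            Pr (Function.update (fun t : Fin n => E (i t.succ) (i (σ t.succ))) s
              (E (i s.succ) (i (σ 0)))) else 0)) := by
    intro i
    rw [stepA]
    congr 1
    refine Finset.sum_congr rfl fun s _ => ?_
    beta_reduce
    rw [bracketE, Pr_update_sub, Pr_update_ite, Pr_update_ite]
  simp only [expand]
  rw [Finset.sum_add_distrib, add_eq_left, Finset.sum_comm]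
  have h1 : (∑ s : Fin n, ∑ i : Fin (n+1) → Fin N, if i (σ 0) = i s.succ then
        Pr (Function.update (fun t : Fin n => E (i t.succ) (i (σ t.succ))) s
          (E (i 0) (i (σ s.succ)))) else 0)
      = ∑ s : Fin n, ∑ i : Fin (n+1) → Fin N, if i (σ s.succ) = i 0 then
        Pr (Function.update (fun t : Fin n => E (i t.succ) (i (σ t.succ))) s
          (E (i s.succ) (i (σ 0)))) else 0 := by
    have h2 := Fintype.sum_bijective (cs σ) (cs_bijective σ)
      (fun s : Fin n => ∑ i : Fin (n+1) → Fin N, if i (σ (cs σ s).succ) = i 0 then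
        Pr (Function.update (fun t : Fin n => E (i t.succ) (i (σ t.succ))) (cs σ s)
          (E (i (cs σ s).succ) (i (σ 0)))) else 0)
      (fun s : Fin n => ∑ i : Fin (n+1) → Fin N, if i (σ s.succ) = i 0 then
        Pr (Function.update (fun t : Fin n => E (i t.succ) (i (σ t.succ))) s
          (E (i s.succ) (i (σ 0)))) else 0)
      (fun s => rfl)
    rw [← h2]
    exact Finset.sum_congr rfl fun s _ => perS N σ s
  simp only [Finset.sum_sub_distrib]
  rw [h1, sub_self]

/-- `w_{gl_N}(σ)` is invariant under conjugation by the cyclic shift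
`c = finRotate m : 1 ↦ 2 ↦ ⋯ ↦ m ↦ 1`; equivalently, it equals the sum of the
cyclically rotated products `ι(E_{i(2) i(σ(2))}) ⋯ ι(E_{i(m) i(σ(m))}) · ι(E_{i(1) i(σ(1))})`. -/
theorem wgl_cyclic_invariance (N : ℕ) (hN : 1 ≤ N) (m : ℕ) (hm : 1 ≤ m)
    (σ : Equiv.Perm (Fin m)) :
    wgl N m σ = wgl N m ((finRotate m)⁻¹ * σ * finRotate m) ∧
    wgl N m σ = ∑ i : Fin m → Fin N,
      (List.ofFn fun t : Fin m =>
        ιgl N (E (i (finRotate m t)) (i (σ (finRotate m t))))).prod := by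
  obtain ⟨n, rfl⟩ : ∃ n, m = n + 1 := ⟨m - 1, (Nat.succ_pred_eq_of_pos hm).symm⟩
  have hsplit : ∀ i : Fin (n+1) → Fin N,
      (List.ofFn fun t : Fin (n+1) => ιgl N (E (i t) (i (σ t)))).prod
      = ιgl N (E (i 0) (i (σ 0))) * Pr (fun t : Fin n => E (i t.succ) (i (σ t.succ))) := by
    intro i; rw [List.ofFn_succ, List.prod_cons]; rfl
  have hrotval : ∀ t : Fin n, finRotate (n+1) (Fin.castSucc t) = t.succ := fun t => by
    rw [finRotate_succ_apply, Fin.coeSucc_eq_succ]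
  have hrot : ∀ i : Fin (n+1) → Fin N,
      (List.ofFn fun t : Fin (n+1) =>
        ιgl N (E (i (finRotate (n+1) t)) (i (σ (finRotate (n+1) t))))).prod
      = Pr (fun t : Fin n => E (i t.succ) (i (σ t.succ))) * ιgl N (E (i 0) (i (σ 0))) := by
    intro i
    rw [List.ofFn_succ', List.prod_concat]
    congr 1
    · show _ = (List.ofFn fun t : Fin n => ιgl N (E (i t.succ) (i (σ t.succ)))).prod
      congr 1
      rw [List.ofFn_inj]
      funext t
      rw [hrotval]
    · rw [finRotate_last]
  have goal2 : wgl N (n+1) σ = ∑ i : Fin (n+1) → Fin N,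
      (List.ofFn fun t : Fin (n+1) =>
        ιgl N (E (i (finRotate (n+1) t)) (i (σ (finRotate (n+1) t))))).prod := by
    unfold wgl
    simp only [hsplit, hrot]
    exact key N σ
  refine ⟨?_, goal2⟩
  rw [goal2]
  unfold wgl
  refine (Fintype.sum_bijective
    (fun (i : Fin (n+1) → Fin N) (u : Fin (n+1)) => i ((finRotate (n+1)).symm u)) ?_ _ _
    (fun i => ?_)).symm
  · apply Function.bijective_iff_has_inverse.mpr
    refine ⟨fun i u => i (finRotate (n+1) u), fun i => funext fun u => ?_, fun i => funext fun u => ?_⟩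
    · show i ((finRotate (n+1)).symm (finRotate (n+1) u)) = i u
      rw [Equiv.symm_apply_apply]
    · show i (finRotate (n+1) ((finRotate (n+1)).symm u)) = i u
      rw [Equiv.apply_symm_apply]
  · beta_reduce
    congr 1
    rw [List.ofFn_inj]
    funext t
    show ιgl N (E (i t) (i (((finRotate (n+1))⁻¹ * σ * finRotate (n+1)) t)))
      = ιgl N (E (i ((finRotate (n+1)).symm (finRotate (n+1) t)))
          (i ((finRotate (n+1)).symm (σ (finRotate (n+1) t)))))
    rw [Equiv.symm_apply_apply]
    rfl
end

section
/- (Recurrence rule, special case.) Let m ≥ 2, let σ be a permutation of {1,…,m}, and let 1 ≤ k ≤ m−1 be such that σ(k+1) = k and σ(k) ≠ k+1. Let τ be the transposition exchanging k and k+1. Let σ₀ be the permutation of {1,…,m}∖{k,k+1} (regarded, via the order-preserving relabeling, as a permutation of {1,…,m−2}) defined by σ₀(σ⁻¹(k+1)) = σ(k) and σ₀(x) = σ(x) for all other x, and let σ₂ be the permutation of {1,…,m}∖{k} (regarded as a permutation of {1,…,m−1}) defined by σ₂(k+1) = σ(k) and σ₂(x) = σ(x) for all other x. Then in U(gl_N):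 w_{gl_N}(σ) − w_{gl_N}(τ∘σ∘τ) = C_1·w_{gl_N}(σ₀) − N·w_{gl_N}(σ₂). -/
open scoped BigOperators

attribute [local instance] LieRing.ofAssociativeRing

/-! Auxiliary list lemmas -/

/-- Removal lemma: a slot containing `1` can be removed. -/
lemma prod_ofFn_removal {M : Type*} [Monoid M] : ∀ {n : ℕ} (v : Fin (n + 1))
    (f : Fin (n + 1) → M), f v = 1 →
    (List.ofFn f).prod = (List.ofFn fun x => f (v.succAbove x)).prod := by
  intro n
  induction n with
  | zero =>
    intro v f hf
    have : v = 0 := Fin.fin_one_eq_zero v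
    subst this
    simp [List.ofFn_succ, hf]
  | succ m ih =>
    intro v f hf
    rcases Fin.eq_zero_or_eq_succ v with hv | ⟨w, hv⟩
    · subst hv
      simp only [List.ofFn_succ, List.prod_cons, hf, one_mul, Fin.succAbove_zero]
    · subst hv
      conv_lhs => rw [List.ofFn_succ]
      conv_rhs => rw [List.ofFn_succ]
      rw [List.prod_cons, List.prod_cons, Fin.succ_succAbove_zero]
      congr 1
      have := ih w (fun t => f t.succ) (by simpa using hf)
      rw [this]
      congr 1
      apply congrArg List.ofFn; funext x
      simp [Fin.succ_succAbove_succ]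

/-- Pair-splitting: the product of `List.ofFn g` splits around two adjacent slots. -/
lemma prod_ofFn_pair {M : Type*} [Monoid M] : ∀ {n : ℕ} (k : Fin (n + 1))
    (f : Fin (n + 2) → M),
    ∃ A B : M,
      (∀ g : Fin (n + 2) → M, (∀ t, t ≠ k.castSucc → t ≠ k.succ → g t = f t) →
        (List.ofFn g).prod = A * g k.castSucc * g k.succ * B) ∧
      (∀ Z : M, (∀ t, t ≠ k.castSucc → t ≠ k.succ → Commute Z (f t)) → Commute Z A) := by
  intro n
  induction n with
  | zero =>
    intro k f
    refine ⟨1, 1, fun g hg => ?_, fun Z _ => Commute.one_right Z⟩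
    have hk : k = 0 := Fin.fin_one_eq_zero k
    subst hk
    simp only [List.ofFn_succ, List.ofFn_zero, List.prod_cons, List.prod_nil,
      Fin.castSucc_zero, one_mul, mul_one, mul_assoc]
  | succ m ih =>
    intro k f
    rcases Fin.eq_zero_or_eq_succ k with hk | ⟨w, hk⟩
    · subst hk
      refine ⟨1, (List.ofFn fun i : Fin (m + 1) => f i.succ.succ).prod, fun g hg => ?_,
        fun Z _ => Commute.one_right Z⟩
      conv_lhs => rw [List.ofFn_succ, List.ofFn_succ]
      rw [List.prod_cons, List.prod_cons]
      have htail : (List.ofFn fun i : Fin (m+1) => g i.succ.succ)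
          = List.ofFn fun i : Fin (m+1) => f i.succ.succ := by
        apply congrArg List.ofFn; funext i
        refine hg _ ?_ ?_ <;> (simp only [Ne, Fin.ext_iff, Fin.val_succ, Fin.coe_castSucc, Fin.val_zero]; omega)
      rw [htail, Fin.castSucc_zero, one_mul, mul_assoc]
    · subst hk
      obtain ⟨A', B', hAB', hcomm'⟩ := ih w (fun t => f t.succ)
      have hcs : ∀ t : Fin (m+2), t ≠ w.castSucc → t.succ ≠ w.succ.castSucc := by
        intro t ht hc
        rw [← Fin.succ_castSucc] at hc
        exact ht (Fin.succ_injective _ hc)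
      refine ⟨f 0 * A', B', fun g hg => ?_, fun Z hZ => ?_⟩
      · conv_lhs => rw [List.ofFn_succ, List.prod_cons]
        have h0 : g 0 = f 0 := by
          refine hg 0 ?_ ?_ <;> (simp only [Ne, Fin.ext_iff, Fin.val_succ, Fin.coe_castSucc, Fin.val_zero]; omega)
        have := hAB' (fun t => g t.succ) (fun t ht1 ht2 => by
          refine hg t.succ (hcs t ht1) ?_
          exact fun hc => ht2 (Fin.succ_injective _ hc))
        rw [this, h0, ← Fin.succ_castSucc]
        simp only [mul_assoc]
      · have hZ0 : Commute Z (f 0) := by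
          refine hZ 0 ?_ ?_ <;> (simp only [Ne, Fin.ext_iff, Fin.val_succ, Fin.coe_castSucc, Fin.val_zero]; omega)
        exact hZ0.mul_right (hcomm' Z (fun t ht1 ht2 =>
          hZ t.succ (hcs t ht1) (fun hc => ht2 (Fin.succ_injective _ hc))))

/-- The `k`-th Casimir element `C_k = Σ E_{i_1 i_2} E_{i_2 i_3} ⋯ E_{i_k i_1}`, i.e. the
value of `w_{gl_N}` on the cyclic permutation `1 ↦ 2 ↦ ⋯ ↦ k ↦ 1`. -/
noncomputable def casimir (N k : ℕ) : UniversalEnvelopingAlgebra ℂ (gl N) :=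
  wgl N k (finRotate k)

/-- The contraction `ρ∖v` of a permutation `ρ` of `{1,…,m}` at a point `v`: the permutation
of `{1,…,m}∖{v}` sending `x` to `ρ(x)` if `ρ(x) ≠ v` and to `ρ(v)` if `ρ(x) = v`, regarded
as a permutation of `{1,…,m−1}` via the order-preserving bijection `v.succAbove`. -/
def contract {n : ℕ} (ρ : Equiv.Perm (Fin (n + 1))) (v : Fin (n + 1)) :
    Equiv.Perm (Fin n) :=
  Equiv.removeNone ((finSuccEquiv' v).symm.trans (ρ.trans (finSuccEquiv' v)))

/-! Contraction lemmas -/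

lemma contract_apply_ne {n : ℕ} (ρ : Equiv.Perm (Fin (n + 1))) (v : Fin (n + 1))
    (x : Fin n) (h : ρ (v.succAbove x) ≠ v) :
    v.succAbove (contract ρ v x) = ρ (v.succAbove x) := by
  obtain ⟨j, hj⟩ := Fin.exists_succAbove_eq h
  set e := (finSuccEquiv' v).symm.trans (ρ.trans (finSuccEquiv' v)) with he
  have h1 : e (some x) = some j := by
    simp [he, Equiv.trans_apply, ← hj]
  have h2 := Equiv.removeNone_some e ⟨j, h1⟩
  rw [h1] at h2
  rw [show contract ρ v x = j from Option.some_injective _ h2, hj]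

lemma contract_apply_eq {n : ℕ} (ρ : Equiv.Perm (Fin (n + 1))) (v : Fin (n + 1))
    (x : Fin n) (h : ρ (v.succAbove x) = v) :
    v.succAbove (contract ρ v x) = ρ v := by
  set e := (finSuccEquiv' v).symm.trans (ρ.trans (finSuccEquiv' v)) with he
  have h1 : e (some x) = none := by
    simp [he, Equiv.trans_apply, h]
  have hrv : ρ v ≠ v := by
    intro hc
    exact Fin.succAbove_ne v x (ρ.injective (h.trans hc.symm))
  obtain ⟨j, hj⟩ := Fin.exists_succAbove_eq hrv
  have h2 := Equiv.removeNone_none e h1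
  have h3 : e none = some j := by
    simp [he, Equiv.trans_apply, ← hj]
  rw [h3] at h2
  rw [show contract ρ v x = j from Option.some_injective _ h2, hj]

/-! Algebra lemmas -/

lemma ιgl_comm (N : ℕ) (x y : gl N) :
    ιgl N x * ιgl N y - ιgl N y * ιgl N x = ιgl N ⁅x, y⁆ := by
  rw [ιgl, ιgl, ιgl, LieHom.map_lie, Ring.lie_def]

lemma matrix_bracket (N : ℕ) (p q r s : Fin N) :
    ⁅E p q, E r s⁆ = (if q = r then E p s else 0) - (if s = p then E r q else 0) := by
  rw [Ring.lie_def]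
  unfold E
  split_ifs with h1 h2 h2
  · subst h1; subst h2
    rw [Matrix.single_mul_single_same, Matrix.single_mul_single_same, one_mul]
  · subst h1
    rw [Matrix.single_mul_single_same, one_mul, Matrix.single_mul_single_of_ne (h := h2),
      sub_zero]
  · subst h2
    rw [Matrix.single_mul_single_same, one_mul, Matrix.single_mul_single_of_ne (h := h1)]
  · rw [Matrix.single_mul_single_of_ne (h := h1), Matrix.single_mul_single_of_ne (h := h2)]

lemma sum_E_diag (N : ℕ) : ∑ c : Fin N, E c c = (1 : gl N) := by
  ext i j
  simp only [Finset.sum_apply, Matrix.sum_apply, E, Matrix.single, Matrix.one_apply,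
    Matrix.of_apply]
  by_cases h : i = j
  · subst h; simp
  · simp only [h, if_false]
    rw [Finset.sum_eq_zero]
    intro c _
    by_cases h1 : c = i
    · subst h1; simp [h]
    · simp [h1]

lemma ιgl_one_commute (N : ℕ) (x : gl N) : Commute (ιgl N 1) (ιgl N x) := by
  have h := ιgl_comm N 1 x
  have h0 : ιgl N (0 : gl N) = 0 := by rw [ιgl]; exact map_zero _
  rw [show ⁅(1 : gl N), x⁆ = 0 by rw [Ring.lie_def, one_mul, mul_one, sub_self], h0,
    sub_eq_zero] at h
  exact h

lemma ιgl_sub (N : ℕ) (x y : gl N) : ιgl N (x - y) = ιgl N x - ιgl N y := by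
  rw [ιgl, ιgl, ιgl]
  exact map_sub _ _ _

lemma ιgl_zero (N : ℕ) : ιgl N (0 : gl N) = 0 := by rw [ιgl]; exact map_zero _

lemma ιgl_sum_diag (N : ℕ) : ∑ c : Fin N, ιgl N (E c c) = ιgl N 1 := by
  rw [← sum_E_diag N, ιgl]
  exact (map_sum ((UniversalEnvelopingAlgebra.ι ℂ (L := gl N)).toLinearMap) _ _).symm

lemma casimir_one (N : ℕ) : casimir N 1 = ιgl N 1 := by
  rw [casimir, wgl, ← ιgl_sum_diag N]
  rw [← Equiv.sum_comp (Equiv.funUnique (Fin 1) (Fin N)).symm]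
  apply Finset.sum_congr rfl
  intro c _
  rw [List.ofFn_succ, List.ofFn_zero, List.prod_cons, List.prod_nil, mul_one]
  congr 1
/-! Words and reindexing -/

def insEq (N : ℕ) {m : ℕ} (a : Fin (m + 1)) :
    (Fin (m + 1) → Fin N) ≃ (Fin N × (Fin m → Fin N)) :=
  (Equiv.piCongrLeft' (fun _ => Fin N) (finSuccEquiv' a)).trans Equiv.piOptionEquivProd

lemma insEq_fst (N : ℕ) {m : ℕ} (a : Fin (m + 1)) (p : Fin N × (Fin m → Fin N)) :
    (insEq N a).symm p a = p.1 :=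
  congrArg Prod.fst ((insEq N a).apply_symm_apply p)

lemma insEq_snd (N : ℕ) {m : ℕ} (a : Fin (m + 1)) (p : Fin N × (Fin m → Fin N)) (x : Fin m) :
    (insEq N a).symm p (a.succAbove x) = p.2 x :=
  congrFun (congrArg Prod.snd ((insEq N a).apply_symm_apply p)) x

/-- The letter functions with the two marked slots replaced, first version. -/
noncomputable def u1 (N : ℕ) {n : ℕ} (σ : Equiv.Perm (Fin (n + 2))) (k : Fin (n + 1))
    (i : Fin (n + 2) → Fin N) : Fin (n + 2) → UniversalEnvelopingAlgebra ℂ (gl N) :=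
  fun t => if t = k.castSucc then ιgl N (E (i k.castSucc) (i k.castSucc))
    else if t = k.succ then 1 else ιgl N (E (i t) (i (σ t)))

/-- Second version. -/
noncomputable def u2 (N : ℕ) {n : ℕ} (σ : Equiv.Perm (Fin (n + 2))) (k : Fin (n + 1))
    (i : Fin (n + 2) → Fin N) : Fin (n + 2) → UniversalEnvelopingAlgebra ℂ (gl N) :=
  fun t => if t = k.castSucc then 1
    else if t = k.succ then ιgl N (E (i k.succ) (i (σ k.castSucc)))
    else ιgl N (E (i t) (i (σ t)))

lemma step2 (N : ℕ) {n : ℕ} (σ : Equiv.Perm (Fin (n + 2))) (k : Fin (n + 1))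
    (h₁ : σ k.succ = k.castSucc) :
    wgl N (n + 2) σ -
      wgl N (n + 2) (Equiv.swap k.castSucc k.succ * σ * Equiv.swap k.castSucc k.succ) =
    (∑ i : Fin (n + 2) → Fin N,
        if i (σ k.castSucc) = i k.succ then (List.ofFn (u1 N σ k i)).prod else 0) -
      ∑ i : Fin (n + 2) → Fin N, (List.ofFn (u2 N σ k i)).prod := by
  have hba : k.succ ≠ k.castSucc := (Fin.castSucc_lt_succ (i := k)).ne'
  have hab : k.castSucc ≠ k.succ := (Fin.castSucc_lt_succ (i := k)).ne
  have hτ : wgl N (n + 2) (Equiv.swap k.castSucc k.succ * σ * Equiv.swap k.castSucc k.succ)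
      = ∑ i : Fin (n + 2) → Fin N,
        (List.ofFn fun t => ιgl N (E (i (Equiv.swap k.castSucc k.succ t))
          (i (σ (Equiv.swap k.castSucc k.succ t))))).prod := by
    rw [wgl]
    refine Fintype.sum_equiv
      (Equiv.arrowCongr (Equiv.swap k.castSucc k.succ) (Equiv.refl (Fin N))) _ _ (fun i => ?_)
    apply congrArg List.prod
    apply congrArg List.ofFn
    funext t
    simp only [Equiv.arrowCongr_apply, Equiv.coe_refl, Function.comp_apply,
      Equiv.symm_swap, Equiv.Perm.mul_apply, Equiv.swap_apply_self, id_eq]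
  rw [hτ, wgl, ← Finset.sum_sub_distrib, ← Finset.sum_sub_distrib]
  refine Finset.sum_congr rfl (fun i _ => ?_)
  obtain ⟨A, B, hAB, -⟩ := prod_ofFn_pair k (fun t => ιgl N (E (i t) (i (σ t))))
  have e1 := hAB (fun t => ιgl N (E (i t) (i (σ t)))) (fun _ _ _ => rfl)
  have e2 := hAB (fun t => ιgl N (E (i (Equiv.swap k.castSucc k.succ t))
      (i (σ (Equiv.swap k.castSucc k.succ t)))))
    (fun t hta htb => by simp only [Equiv.swap_apply_of_ne_of_ne hta htb])
  have e3 := hAB (u1 N σ k i) (fun t hta htb => by simp [u1, hta, htb])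
  have e4 := hAB (u2 N σ k i) (fun t hta htb => by simp [u2, hta, htb])
  simp only [Equiv.swap_apply_left, Equiv.swap_apply_right, h₁] at e1 e2
  have hu1a : u1 N σ k i k.castSucc = ιgl N (E (i k.castSucc) (i k.castSucc)) := by
    simp [u1]
  have hu1b : u1 N σ k i k.succ = 1 := by simp [u1, hba]
  have hu2a : u2 N σ k i k.castSucc = 1 := by simp [u2]
  have hu2b : u2 N σ k i k.succ = ιgl N (E (i k.succ) (i (σ k.castSucc))) := by
    simp [u2, hba]
  rw [e1, e2, e3, e4, hu1a, hu1b, hu2a, hu2b]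
  set X := ιgl N (E (i k.castSucc) (i (σ k.castSucc)))
  set Y := ιgl N (E (i k.succ) (i k.castSucc))
  have hflat : A * X * Y * B - A * Y * X * B = A * (X * Y - Y * X) * B := by noncomm_ring
  rw [hflat]
  by_cases hc : i (σ k.castSucc) = i k.succ
  · have key : X * Y - Y * X
        = ιgl N (E (i k.castSucc) (i k.castSucc)) - ιgl N (E (i k.succ) (i (σ k.castSucc))) := by
      rw [ιgl_comm, matrix_bracket, if_pos hc, if_pos rfl, ιgl_sub]
    rw [key, if_pos hc, mul_sub A, sub_mul, mul_one (A * ιgl N (E (i k.castSucc) (i k.castSucc))),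
      mul_one A]
  · have key : X * Y - Y * X = 0 - ιgl N (E (i k.succ) (i (σ k.castSucc))) := by
      rw [ιgl_comm, matrix_bracket, if_neg hc, if_pos rfl, ιgl_sub, ιgl_zero]
    rw [key, if_neg hc, mul_sub A, sub_mul, mul_zero A, zero_mul, mul_one A]

lemma sum2_eq (N : ℕ) {n : ℕ} (σ : Equiv.Perm (Fin (n + 2))) (k : Fin (n + 1))
    (h₁ : σ k.succ = k.castSucc) :
    ∑ i : Fin (n + 2) → Fin N, (List.ofFn (u2 N σ k i)).prod =
      (N : UniversalEnvelopingAlgebra ℂ (gl N)) * wgl N (n + 1) (contract σ k.castSucc) := by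
  have hba : k.succ ≠ k.castSucc := (Fin.castSucc_lt_succ (i := k)).ne'
  have hF4 : k.castSucc.succAbove k = k.succ := Fin.succAbove_castSucc_self k
  have hC2 : k.castSucc.succAbove (contract σ k.castSucc k) = σ k.castSucc :=
    contract_apply_eq σ k.castSucc k (by rw [hF4, h₁])
  have hC1 : ∀ x : Fin (n + 1), x ≠ k →
      k.castSucc.succAbove (contract σ k.castSucc x) = σ (k.castSucc.succAbove x) := by
    intro x hx
    refine contract_apply_ne σ k.castSucc x (fun hc => hx ?_)
    have : k.castSucc.succAbove x = k.succ := σ.injective (hc.trans h₁.symm)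
    exact Fin.succAbove_right_injective (this.trans hF4.symm)
  have hper : ∀ i : Fin (n + 2) → Fin N, (List.ofFn (u2 N σ k i)).prod
      = (List.ofFn fun x : Fin (n + 1) => ιgl N (E (i (k.castSucc.succAbove x))
          (i (k.castSucc.succAbove (contract σ k.castSucc x))))).prod := by
    intro i
    rw [prod_ofFn_removal k.castSucc (u2 N σ k i) (by simp [u2])]
    apply congrArg List.prod
    apply congrArg List.ofFn
    funext x
    by_cases hx : x = k
    · subst hx
      rw [hC2, hF4]
      simp [u2, hba]
    · have h1 : k.castSucc.succAbove x ≠ k.castSucc := Fin.succAbove_ne k.castSucc x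
      have h2 : k.castSucc.succAbove x ≠ k.succ := by
        rw [← hF4]
        exact fun hc => hx (Fin.succAbove_right_injective hc)
      rw [hC1 x hx]
      simp [u2, h1, h2]
  calc ∑ i : Fin (n + 2) → Fin N, (List.ofFn (u2 N σ k i)).prod
      = ∑ i : Fin (n + 2) → Fin N, (List.ofFn fun x : Fin (n + 1) =>
          ιgl N (E (i (k.castSucc.succAbove x))
            (i (k.castSucc.succAbove (contract σ k.castSucc x))))).prod :=
        Finset.sum_congr rfl (fun i _ => hper i)
    _ = ∑ p : Fin N × (Fin (n + 1) → Fin N), (List.ofFn fun x : Fin (n + 1) =>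
          ιgl N (E (p.2 x) (p.2 (contract σ k.castSucc x)))).prod := by
        rw [← Equiv.sum_comp (insEq N k.castSucc).symm
          (fun i => (List.ofFn fun x : Fin (n + 1) => ιgl N (E (i (k.castSucc.succAbove x))
            (i (k.castSucc.succAbove (contract σ k.castSucc x))))).prod)]
        refine Finset.sum_congr rfl (fun p _ => ?_)
        apply congrArg List.prod
        apply congrArg List.ofFn
        funext x
        rw [insEq_snd, insEq_snd]
    _ = ∑ c : Fin N, ∑ j : Fin (n + 1) → Fin N, (List.ofFn fun x : Fin (n + 1) =>
          ιgl N (E (j x) (j (contract σ k.castSucc x)))).prod :=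
        Fintype.sum_prod_type (f := fun p : Fin N × (Fin (n + 1) → Fin N) =>
          (List.ofFn fun x : Fin (n + 1) =>
            ιgl N (E (p.2 x) (p.2 (contract σ k.castSucc x)))).prod)
    _ = (N : UniversalEnvelopingAlgebra ℂ (gl N)) * wgl N (n + 1) (contract σ k.castSucc) := by
        rw [Finset.sum_const, Finset.card_univ, Fintype.card_fin, nsmul_eq_mul, wgl]

lemma sum1_eq (N : ℕ) (hN : 1 ≤ N) {n : ℕ} (σ : Equiv.Perm (Fin (n + 2))) (k : Fin (n + 1))
    (h₁ : σ k.succ = k.castSucc) (h₂ : σ k.castSucc ≠ k.succ) :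
    ∑ i : Fin (n + 2) → Fin N,
        (if i (σ k.castSucc) = i k.succ then (List.ofFn (u1 N σ k i)).prod else 0) =
      casimir N 1 * wgl N n (contract (contract σ k.castSucc) k) := by
  have hba : k.succ ≠ k.castSucc := (Fin.castSucc_lt_succ (i := k)).ne'
  have hab : k.castSucc ≠ k.succ := (Fin.castSucc_lt_succ (i := k)).ne
  have hF4 : k.castSucc.succAbove k = k.succ := Fin.succAbove_castSucc_self k
  have hC2 : k.castSucc.succAbove (contract σ k.castSucc k) = σ k.castSucc :=
    contract_apply_eq σ k.castSucc k (by rw [hF4, h₁])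
  have hC1 : ∀ x : Fin (n + 1), x ≠ k →
      k.castSucc.succAbove (contract σ k.castSucc x) = σ (k.castSucc.succAbove x) := by
    intro x hx
    refine contract_apply_ne σ k.castSucc x (fun hc => hx ?_)
    have : k.castSucc.succAbove x = k.succ := σ.injective (hc.trans h₁.symm)
    exact Fin.succAbove_right_injective (this.trans hF4.symm)
  have hσa : σ k.castSucc ≠ k.castSucc := fun hc => hba (σ.injective (h₁.trans hc.symm))
  obtain ⟨s1, hs1⟩ := Fin.exists_succAbove_eq hσa
  have hσ₂k : contract σ k.castSucc k = s1 :=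
    Fin.succAbove_right_injective (hC2.trans hs1.symm)
  have hs1k : s1 ≠ k := fun hc => h₂ (by rw [← hs1, hc, hF4])
  obtain ⟨s2, hs2⟩ := Fin.exists_succAbove_eq hs1k
  have hD1 : ∀ y : Fin n, contract σ k.castSucc (k.succAbove y) ≠ k →
      k.succAbove (contract (contract σ k.castSucc) k y)
        = contract σ k.castSucc (k.succAbove y) :=
    fun y hy => contract_apply_ne (contract σ k.castSucc) k y hy
  have hD2 : ∀ y : Fin n, contract σ k.castSucc (k.succAbove y) = k →
      k.succAbove (contract (contract σ k.castSucc) k y) = s1 :=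
    fun y hy => (contract_apply_eq (contract σ k.castSucc) k y hy).trans hσ₂k
  have d0 : Fin N := ⟨0, hN⟩
  -- the inner computation
  have inner : ∀ j : Fin (n + 1) → Fin N,
      (∑ c : Fin N, if ((insEq N k.castSucc).symm (c, j)) (σ k.castSucc)
            = ((insEq N k.castSucc).symm (c, j)) k.succ
          then (List.ofFn (u1 N σ k ((insEq N k.castSucc).symm (c, j)))).prod else 0)
      = if j s1 = j k then ιgl N 1 * (List.ofFn fun y : Fin n =>
          ιgl N (E (j (k.succAbove y))
            (j (k.succAbove (contract (contract σ k.castSucc) k y))))).prod else 0 := by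
    intro j
    have hcσ : ∀ c : Fin N, ((insEq N k.castSucc).symm (c, j)) (σ k.castSucc) = j s1 := by
      intro c; rw [← hs1, insEq_snd]
    have hcb : ∀ c : Fin N, ((insEq N k.castSucc).symm (c, j)) k.succ = j k := by
      intro c; rw [← hF4, insEq_snd]
    by_cases hcnd : j s1 = j k
    · rw [if_pos hcnd]
      obtain ⟨A, B, hAB, hcomm⟩ :=
        prod_ofFn_pair k (u1 N σ k ((insEq N k.castSucc).symm (d0, j)))
      have hoff : ∀ (c : Fin N) (t : Fin (n + 2)), t ≠ k.castSucc → t ≠ k.succ →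
          u1 N σ k ((insEq N k.castSucc).symm (c, j)) t
            = u1 N σ k ((insEq N k.castSucc).symm (d0, j)) t := by
        intro c t hta htb
        obtain ⟨x, hx⟩ := Fin.exists_succAbove_eq hta
        have hσt : σ t ≠ k.castSucc := fun hc => htb (σ.injective (hc.trans h₁.symm))
        obtain ⟨x', hx'⟩ := Fin.exists_succAbove_eq hσt
        simp only [u1, if_neg hta, if_neg htb]
        rw [← hx', ← hx, insEq_snd, insEq_snd, insEq_snd, insEq_snd]
      -- split each term
      have hterm : ∀ c : Fin N,
          (List.ofFn (u1 N σ k ((insEq N k.castSucc).symm (c, j)))).prod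
            = A * ιgl N (E c c) * 1 * B := by
        intro c
        have hua : u1 N σ k ((insEq N k.castSucc).symm (c, j)) k.castSucc = ιgl N (E c c) := by
          simp [u1, insEq_fst]
        have hub : u1 N σ k ((insEq N k.castSucc).symm (c, j)) k.succ = 1 := by
          simp [u1, hba]
        rw [hAB (u1 N σ k ((insEq N k.castSucc).symm (c, j))) (hoff c), hua, hub]
      have hsum : (∑ c : Fin N, if ((insEq N k.castSucc).symm (c, j)) (σ k.castSucc)
            = ((insEq N k.castSucc).symm (c, j)) k.succ
          then (List.ofFn (u1 N σ k ((insEq N k.castSucc).symm (c, j)))).prod else 0)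
          = A * ιgl N 1 * B := by
        calc (∑ c : Fin N, if ((insEq N k.castSucc).symm (c, j)) (σ k.castSucc)
              = ((insEq N k.castSucc).symm (c, j)) k.succ
            then (List.ofFn (u1 N σ k ((insEq N k.castSucc).symm (c, j)))).prod else 0)
            = ∑ c : Fin N, A * ιgl N (E c c) * B := by
              refine Finset.sum_congr rfl (fun c _ => ?_)
              rw [hcσ, hcb, if_pos hcnd, hterm c, mul_one]
          _ = A * (∑ c : Fin N, ιgl N (E c c)) * B := by
              rw [← Finset.sum_mul, ← Finset.mul_sum]
          _ = A * ιgl N 1 * B := by rw [ιgl_sum_diag]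
      rw [hsum]
      -- commute ι1 out
      have hZA : Commute (ιgl N 1) A := by
        refine hcomm _ (fun t hta htb => ?_)
        have hσt : σ t ≠ k.castSucc := fun hc => htb (σ.injective (hc.trans h₁.symm))
        have : u1 N σ k ((insEq N k.castSucc).symm (d0, j)) t
            = ιgl N (E (((insEq N k.castSucc).symm (d0, j)) t)
                (((insEq N k.castSucc).symm (d0, j)) (σ t))) := by
          simp only [u1, if_neg hta, if_neg htb]
        rw [this]
        exact ιgl_one_commute N _
      rw [← hZA.eq, mul_assoc]
      congr 1
      -- now identify A * B with the contracted word
      have hvb : u1 N σ k ((insEq N k.castSucc).symm (d0, j)) k.succ = 1 := by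
        simp [u1, hba]
      have hv := hAB (fun t => if t = k.castSucc then 1
          else u1 N σ k ((insEq N k.castSucc).symm (d0, j)) t)
        (fun t hta htb => by simp only [if_neg hta])
      have hva1 : (fun t => if t = k.castSucc then 1
          else u1 N σ k ((insEq N k.castSucc).symm (d0, j)) t) k.castSucc = 1 := by simp
      have hvb1 : (fun t => if t = k.castSucc then 1
          else u1 N σ k ((insEq N k.castSucc).symm (d0, j)) t) k.succ = 1 := by
        simp only [if_neg hba, hvb]
      rw [if_pos rfl, if_neg hba, hvb, mul_one, mul_one] at hv
      rw [← hv]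
      -- double removal
      rw [prod_ofFn_removal k.castSucc _ (by simp)]
      have hw1 : (fun x : Fin (n + 1) => (fun t => if t = k.castSucc then 1
            else u1 N σ k ((insEq N k.castSucc).symm (d0, j)) t) (k.castSucc.succAbove x))
          = fun x : Fin (n + 1) => if x = k then 1
            else ιgl N (E (j x) (j (contract σ k.castSucc x))) := by
        funext x
        dsimp only
        have h1 : k.castSucc.succAbove x ≠ k.castSucc := Fin.succAbove_ne k.castSucc x
        rw [if_neg h1]
        by_cases hx : x = k
        · subst hx
          rw [if_pos rfl, hF4, hvb]
        · have h2 : k.castSucc.succAbove x ≠ k.succ := by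
            rw [← hF4]
            exact fun hc => hx (Fin.succAbove_right_injective hc)
          rw [if_neg hx]
          simp only [u1, if_neg h1, if_neg h2]
          rw [← hC1 x hx, insEq_snd, insEq_snd]
      rw [hw1, prod_ofFn_removal k _ (by simp)]
      apply congrArg List.prod
      apply congrArg List.ofFn
      funext y
      rw [if_neg (Fin.succAbove_ne k y)]
      by_cases hy : contract σ k.castSucc (k.succAbove y) = k
      · rw [hy, hD2 y hy, ← hcnd]
      · rw [hD1 y hy]
    · rw [if_neg hcnd]
      refine Finset.sum_eq_zero (fun c _ => ?_)
      rw [hcσ, hcb, if_neg hcnd]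
  -- assemble
  calc ∑ i : Fin (n + 2) → Fin N,
        (if i (σ k.castSucc) = i k.succ then (List.ofFn (u1 N σ k i)).prod else 0)
      = ∑ p : Fin N × (Fin (n + 1) → Fin N),
          (if ((insEq N k.castSucc).symm p) (σ k.castSucc) = ((insEq N k.castSucc).symm p) k.succ
            then (List.ofFn (u1 N σ k ((insEq N k.castSucc).symm p))).prod else 0) := by
        rw [Equiv.sum_comp (insEq N k.castSucc).symm
          (fun i => if i (σ k.castSucc) = i k.succ then (List.ofFn (u1 N σ k i)).prod else 0)]
    _ = ∑ j : Fin (n + 1) → Fin N, ∑ c : Fin N,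
          (if ((insEq N k.castSucc).symm (c, j)) (σ k.castSucc)
              = ((insEq N k.castSucc).symm (c, j)) k.succ
            then (List.ofFn (u1 N σ k ((insEq N k.castSucc).symm (c, j)))).prod else 0) := by
        rw [Fintype.sum_prod_type (f := fun p : Fin N × (Fin (n + 1) → Fin N) =>
          if ((insEq N k.castSucc).symm p) (σ k.castSucc) = ((insEq N k.castSucc).symm p) k.succ
            then (List.ofFn (u1 N σ k ((insEq N k.castSucc).symm p))).prod else 0)]
        exact Finset.sum_comm
    _ = ∑ j : Fin (n + 1) → Fin N, if j s1 = j k then ιgl N 1 * (List.ofFn fun y : Fin n =>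
          ιgl N (E (j (k.succAbove y))
            (j (k.succAbove (contract (contract σ k.castSucc) k y))))).prod else 0 :=
        Finset.sum_congr rfl (fun j _ => inner j)
    _ = ∑ q : Fin N × (Fin n → Fin N), if ((insEq N k).symm q) s1 = ((insEq N k).symm q) k
          then ιgl N 1 * (List.ofFn fun y : Fin n =>
            ιgl N (E (((insEq N k).symm q) (k.succAbove y))
              (((insEq N k).symm q) (k.succAbove (contract (contract σ k.castSucc) k y))))).prod
          else 0 := by
        rw [Equiv.sum_comp (insEq N k).symm
          (fun j : Fin (n + 1) → Fin N => if j s1 = j k then ιgl N 1 * (List.ofFn fun y : Fin n =>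
            ιgl N (E (j (k.succAbove y))
              (j (k.succAbove (contract (contract σ k.castSucc) k y))))).prod else 0)]
    _ = ∑ j' : Fin n → Fin N, ∑ d : Fin N, (if j' s2 = d
          then ιgl N 1 * (List.ofFn fun y : Fin n =>
            ιgl N (E (j' y) (j' (contract (contract σ k.castSucc) k y)))).prod else 0) := by
        rw [Fintype.sum_prod_type (f := fun q : Fin N × (Fin n → Fin N) =>
          if ((insEq N k).symm q) s1 = ((insEq N k).symm q) k
          then ιgl N 1 * (List.ofFn fun y : Fin n =>
            ιgl N (E (((insEq N k).symm q) (k.succAbove y))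
              (((insEq N k).symm q) (k.succAbove (contract (contract σ k.castSucc) k y))))).prod
          else 0)]
        rw [Finset.sum_comm]
        refine Finset.sum_congr rfl (fun j' _ => Finset.sum_congr rfl (fun d _ => ?_))
        rw [show ((insEq N k).symm (d, j')) s1 = j' s2 by rw [← hs2, insEq_snd],
          show ((insEq N k).symm (d, j')) k = d by rw [insEq_fst]]
        congr 2
        apply congrArg List.prod
        apply congrArg List.ofFn
        funext y
        rw [insEq_snd, insEq_snd]
    _ = ∑ j' : Fin n → Fin N, ιgl N 1 * (List.ofFn fun y : Fin n =>
          ιgl N (E (j' y) (j' (contract (contract σ k.castSucc) k y)))).prod := by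
        refine Finset.sum_congr rfl (fun j' _ => ?_)
        rw [Finset.sum_ite_eq Finset.univ (j' s2)
          (fun _ => ιgl N 1 * (List.ofFn fun y : Fin n =>
            ιgl N (E (j' y) (j' (contract (contract σ k.castSucc) k y)))).prod),
          if_pos (Finset.mem_univ _)]
    _ = casimir N 1 * wgl N n (contract (contract σ k.castSucc) k) := by
        rw [← Finset.mul_sum, casimir_one, wgl]

/-- The recurrence rule for `w_{gl_N}`, special case `σ(k+1) = k`, `σ(k) ≠ k+1`:
`w(σ) − w(τστ) = C₁ · w(σ₀) − N · w(σ₂)`, where `τ` is the transposition of `k, k+1`,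
`σ₂ = σ∖k` is the permutation of `{1,…,m}∖{k}` with `σ₂(k+1) = σ(k)` and `σ₂(x) = σ(x)`
otherwise, and `σ₀ = σ₂∖(k+1)` is the permutation of `{1,…,m}∖{k,k+1}` with
`σ₀(σ⁻¹(k+1)) = σ(k)` and `σ₀(x) = σ(x)` otherwise.  (After removing `k = k.castSucc`,
the point `k+1 = k.succ` gets the label `k` in `Fin (n+1)`.) -/
theorem wgl_recurrence_special (N : ℕ) (hN : 1 ≤ N) (n : ℕ)
    (σ : Equiv.Perm (Fin (n + 2))) (k : Fin (n + 1))
    (h₁ : σ k.succ = k.castSucc) (h₂ : σ k.castSucc ≠ k.succ) :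
    wgl N (n + 2) σ -
      wgl N (n + 2)
        (Equiv.swap k.castSucc k.succ * σ * Equiv.swap k.castSucc k.succ) =
    casimir N 1 * wgl N n (contract (contract σ k.castSucc) k) -
      (N : UniversalEnvelopingAlgebra ℂ (gl N)) * wgl N (n + 1) (contract σ k.castSucc) := by
  rw [step2 N σ k h₁, sum1_eq N hN σ k h₁ h₂, sum2_eq N σ k h₁]
end

section
/- (Universality.) For every integer m ≥ 0 and every permutation σ of {1,…,m} there exists a polynomial P with integer coefficients in m+1 variables y, x_1, …, x_m such that for every integer N ≥ 1, w_{gl_N}(σ) = P(N·1, C_1, C_2, …, C_m) in U(gl_N), where C_j denotes the j-th Casimir element of U(gl_N); the polynomial P is independent of N. -/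
open scoped BigOperators

attribute [local instance] LieRing.ofAssociativeRing

/-- The evaluation of a multivariate integer polynomial `P` in the variables
`y, x_1, …, x_m` (indexed by `Fin (m+1)`, with `0 ↦ y`) at the elements
`N·1, C_1, …, C_m` of `U(gl_N)` (these elements commute pairwise, being central). -/
noncomputable def evalAtCasimirs (N m : ℕ) (P : MvPolynomial (Fin (m + 1)) ℤ) :
    UniversalEnvelopingAlgebra ℂ (gl N) :=
  ∑ d ∈ P.support,
    P.coeff d •
      (List.ofFn fun v : Fin (m + 1) =>
        (Fin.cases ((N : UniversalEnvelopingAlgebra ℂ (gl N)))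
            (fun j : Fin m => casimir N ((j : ℕ) + 1)) v) ^ d v).prod

/-!
Write `w(σ)` as the word sum `∑ᵢ ∏_{a ∈ s} E_{i(a) i(σ a)}` over a listing `s` of the letters.
Swapping two adjacent letters `a, c` of `s` changes it by the commutator of `E_{i(a) i(σ a)}`
and `E_{i(c) i(σ c)}`. Its two terms glue two indices (`i(σ a) = i(c)`, resp. `i(σ c) = i(a)`),
and each is the word sum of `σ * swap a c` with `c`, resp. `a`, cut out of its cycle, times `N`
when the letter cut out is a fixed point. By induction on the number of letters, the word sum
therefore depends on the listing only up to integer polynomials in `N, C_1, …, C_m`. Listing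
the cycles of `σ` one after another, by increasing length, gives exactly the ordered product
`C_{k_1} ⋯ C_{k_r}`, which is the value of a monomial.
-/

theorem List.prod_ofFn_pow_eq_mul_of_succ_at {M : Type*} [Monoid M] :
    ∀ {n : ℕ} (x : Fin n → M) (d e : Fin n → ℕ) (k : Fin n), (∀ v < k, d v = 0) →
      (∀ v, e v = d v + if k = v then 1 else 0) →
      (List.ofFn fun v => x v ^ e v).prod = x k * (List.ofFn fun v => x v ^ d v).prod
  | 0, _, _, _, k, _, _ => k.elim0
  | n + 1, x, d, e, k, hd, he => by
    simp only [List.ofFn_succ, List.prod_cons]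
    cases k using Fin.cases with
    | zero =>
      have hrest : ∀ v : Fin n, e v.succ = d v.succ := fun v => by
        simp [he, (Fin.succ_ne_zero v).symm]
      simp only [he 0, if_pos, hrest, pow_succ', mul_assoc]
    | succ k =>
      have h0 : e 0 = 0 := by simp [he, hd 0 (Fin.succ_pos k), Fin.succ_ne_zero]
      simp only [h0, hd 0 (Fin.succ_pos k), pow_zero, one_mul]
      exact List.prod_ofFn_pow_eq_mul_of_succ_at _ _ _ k
        (fun v hv => hd v.succ (Fin.succ_lt_succ_iff.2 hv)) fun v => by simp [he, Fin.succ_inj]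

theorem List.prod_ofFn_pow_count {M : Type*} [Monoid M] {n : ℕ} (x : Fin n → M)
    {l : List (Fin n)} (hl : l.Pairwise (· ≤ ·)) :
    (List.ofFn fun v => x v ^ l.count v).prod = (l.map x).prod := by
  induction l with
  | nil => simp
  | cons k t ih =>
    rw [List.map_cons, List.prod_cons, ← ih (List.pairwise_cons.1 hl).2]
    refine List.prod_ofFn_pow_eq_mul_of_succ_at x _ _ k
      (fun v hv => List.count_eq_zero.2 fun hvt => ?_) fun v => by simp [List.count_cons]
    exact absurd ((List.pairwise_cons.1 hl).1 v hvt) (not_le.2 hv)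

theorem List.Perm.sub_mem_of_swap {α G : Type*} [AddGroup G] {H : AddSubgroup G}
    {F : List α → G} {s : List α}
    (hswap : ∀ p q a c, (p ++ a :: c :: q).Perm s → F (p ++ a :: c :: q) - F (p ++ c :: a :: q) ∈ H)
    {l₁ l₂ : List α} (h : l₁.Perm l₂) (hs : l₁.Perm s) : F l₁ - F l₂ ∈ H := by
  suffices ∀ p, (p ++ l₁).Perm s → F (p ++ l₁) - F (p ++ l₂) ∈ H from this [] hs
  clear hs
  induction h with
  | nil => exact fun p _ => by rw [sub_self]; exact H.zero_mem
  | cons x _ ih => exact fun p hp => by simpa using ih (p ++ [x]) (by simpa using hp)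
  | swap x y l => exact fun p hp => hswap p l y x hp
  | trans h₁₂ _ ih₁ ih₂ =>
    exact fun p hp => by
      simpa using H.add_mem (ih₁ p hp) (ih₂ p ((h₁₂.append_left p).symm.trans hp))

theorem Function.iterate_finRotate {α : Type*} {f : α → α} {x : α} (j : Fin (minimalPeriod f x)) :
    f (f^[j] x) = f^[finRotate _ j] x := by
  have := j.neZero
  rw [finRotate_apply, Fin.val_add, Fin.val_one', Nat.add_mod_mod, iterate_mod_minimalPeriod_eq,
    iterate_succ_apply']

namespace WglUniversal

open MvPolynomial Equiv Function Fin.NatCast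

local notation "𝓤" N => UniversalEnvelopingAlgebra ℂ (gl N)

section Evaluation

noncomputable def casimirVar (N m : ℕ) : Fin (m + 1) → 𝓤 N :=
  Fin.cases (N : 𝓤 N) fun j : Fin m => casimir N (j + 1)

lemma casimirVar_natCast {N m k : ℕ} (hk : 1 ≤ k) (hkm : k ≤ m) :
    casimirVar N m k = casimir N k := by
  obtain ⟨j, rfl⟩ := Nat.exists_eq_add_of_le' hk
  have : (Nat.cast (j + 1) : Fin (m + 1)) = Fin.succ ⟨j, by omega⟩ :=
    Fin.ext (Nat.mod_eq_of_lt (by omega))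
  rw [this, casimirVar, Fin.cases_succ]

lemma evalAtCasimirs_eq_sum (N m : ℕ) (P : MvPolynomial (Fin (m + 1)) ℤ) :
    evalAtCasimirs N m P =
      (AddMonoidAlgebra.coeff P).sum fun d c =>
        c • (List.ofFn fun v => casimirVar N m v ^ d v).prod := by
  rw [sum_def]; rfl

noncomputable def evalAtCasimirsHom (m : ℕ) :
    MvPolynomial (Fin (m + 1)) ℤ →+ ((N : ℕ) → 𝓤 N) where
  toFun P N := evalAtCasimirs N m P
  map_zero' := by
    funext N
    rw [Pi.zero_apply, evalAtCasimirs_eq_sum]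
    exact Finsupp.sum_zero_index
  map_add' P Q := by
    funext N
    simp only [evalAtCasimirs_eq_sum, Pi.add_apply, AddMonoidAlgebra.coeff_add]
    exact Finsupp.sum_add_index' (fun _ => zero_smul ℤ _) fun _ _ _ => add_smul _ _ _

noncomputable def casimirPolynomials (m : ℕ) : AddSubgroup ((N : ℕ) → 𝓤 N) :=
  (evalAtCasimirsHom m).range

lemma evalAtCasimirs_monomial (N m : ℕ) (d : Fin (m + 1) →₀ ℕ) (c : ℤ) :
    evalAtCasimirs N m (monomial d c) = c • (List.ofFn fun v => casimirVar N m v ^ d v).prod := by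
  rw [evalAtCasimirs_eq_sum]
  exact sum_monomial_eq (zero_smul ℤ _)

lemma natCast_mul_mem_casimirPolynomials {m : ℕ} {f : (N : ℕ) → 𝓤 N}
    (hf : f ∈ casimirPolynomials m) : (fun N => (N : 𝓤 N) * f N) ∈ casimirPolynomials m := by
  obtain ⟨P, rfl⟩ := hf
  refine ⟨X 0 * P, funext fun N => ?_⟩
  induction P using MvPolynomial.induction_on' with
  | monomial d c =>
    change evalAtCasimirs N m _ = _ * evalAtCasimirs N m _
    rw [X, monomial_mul, one_mul, evalAtCasimirs_monomial, evalAtCasimirs_monomial,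
      List.prod_ofFn_pow_eq_mul_of_succ_at _ d _ 0 (fun v hv => absurd hv (Fin.not_lt_zero v))
        fun v => by simp [Finsupp.single_apply, add_comm], mul_smul_comm]
    rfl
  | add P Q hP hQ => simp only [mul_add, map_add, Pi.add_apply, hP, hQ]

lemma prod_casimir_mem_casimirPolynomials {m : ℕ} {ks : List ℕ} (hsort : ks.Pairwise (· ≤ ·))
    (hks : ∀ k ∈ ks, 1 ≤ k ∧ k ≤ m) :
    (fun N => (ks.map (casimir N)).prod) ∈ casimirPolynomials m := by
  have hval : ∀ k ∈ ks, ((k : Fin (m + 1)) : ℕ) = k := fun k hk =>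
    Nat.mod_eq_of_lt (Nat.lt_succ_of_le (hks k hk).2)
  have hsort' : (ks.map ((↑) : ℕ → Fin (m + 1))).Pairwise (· ≤ ·) :=
    List.pairwise_map.2 <| hsort.imp_of_mem fun ha hb hab => by
      rw [Fin.le_def, hval _ ha, hval _ hb]; exact hab
  refine ⟨monomial (Multiset.toFinsupp ↑(ks.map ((↑) : ℕ → Fin (m + 1)))) 1, funext fun N => ?_⟩
  change evalAtCasimirs N m _ = _
  simp only [evalAtCasimirs_monomial, one_smul, Multiset.toFinsupp_apply, Multiset.coe_count]
  rw [List.prod_ofFn_pow_count _ hsort', List.map_map]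
  exact congrArg List.prod <| List.map_congr_left fun k hk =>
    casimirVar_natCast (hks k hk).1 (hks k hk).2

end Evaluation

section WordSum

variable {ι κ : Type*} (N : ℕ)

noncomputable def wordTerm (i : ι → Fin N) (s : List ι) (g : ι → ι) : 𝓤 N :=
  (s.map fun a => ιgl N (E (i a) (i (g a)))).prod

lemma wordTerm_append_cons (i : ι → Fin N) (p q : List ι) (z : ι) (g : ι → ι) :
    wordTerm N i (p ++ z :: q) g =
      wordTerm N i p g * (ιgl N (E (i z) (i (g z))) * wordTerm N i q g) := by
  simp [wordTerm]

lemma wordTerm_cons (i : ι → Fin N) (z : ι) (q : List ι) (g : ι → ι) :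
    wordTerm N i (z :: q) g = ιgl N (E (i z) (i (g z))) * wordTerm N i q g := by
  simp [wordTerm]

lemma wordTerm_congr (i : ι → Fin N) {s : List ι} {g g' : ι → ι} (h : ∀ z ∈ s, g z = g' z) :
    wordTerm N i s g = wordTerm N i s g' :=
  congrArg List.prod <| List.map_congr_left fun z hz => by rw [h z hz]

variable [Fintype ι] [DecidableEq ι] [Fintype κ] [DecidableEq κ]

noncomputable def wordSum (s : List ι) (g : ι → ι) : 𝓤 N :=
  ∑ i : ι → Fin N, wordTerm N i s g

lemma wgl_eq_wordSum (m : ℕ) (σ : Perm (Fin m)) :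
    wgl N m σ = wordSum N (List.finRange m) σ :=
  Finset.sum_congr rfl fun i _ => by rw [wordTerm, List.ofFn_eq_map]

lemma wordSum_map_equiv (e : κ ≃ ι) (s : List κ) {g : ι → ι} {g' : κ → κ}
    (h : ∀ x ∈ s, g (e x) = e (g' x)) :
    wordSum N (s.map e) g = wordSum N s g' := by
  refine (Fintype.sum_equiv (e.arrowCongr (Equiv.refl (Fin N))) _ _ fun j => ?_).symm
  rw [wordTerm, wordTerm, List.map_map]
  exact congrArg List.prod <| List.map_congr_left fun x hx => by simp [h x hx]

lemma wordSum_map_equiv_finRotate {k : ℕ} (e : Fin k ≃ κ) {g : κ → κ}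
    (h : ∀ j, g (e j) = e (finRotate k j)) :
    wordSum N ((List.finRange k).map e) g = casimir N k := by
  rw [casimir, wgl_eq_wordSum, wordSum_map_equiv N e _ fun j _ => h j]

lemma wordSum_append_subtype (p : ι → Prop) [DecidablePred p] (σ : Perm ι)
    (h : ∀ x, p (σ x) ↔ p x) (s₁ : List {x // p x}) (s₂ : List {x // ¬ p x}) :
    wordSum N (s₁.map (↑) ++ s₂.map (↑)) σ =
      wordSum N s₁ (σ.subtypePerm h) * wordSum N s₂ (σ.subtypePerm fun x => not_congr (h x)) := by
  rw [wordSum, wordSum, wordSum, Finset.sum_mul_sum, ← Fintype.sum_prod_type']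
  refine Fintype.sum_equiv (piEquivPiSubtypeProd p fun _ => Fin N) _ _ fun i => ?_
  simp only [wordTerm, List.map_append, List.prod_append, List.map_map]
  rfl

end WordSum

lemma E_mul_E {N : ℕ} (a b c d : Fin N) : E a b * E c d = if b = c then E a d else 0 := by
  split_ifs with h
  · subst h; simp [E]
  · simp [E, h]

lemma ιgl_E_mul_ιgl_E {N : ℕ} (a b c d : Fin N) :
    ιgl N (E a b) * ιgl N (E c d) =
      ιgl N (E c d) * ιgl N (E a b) + (if b = c then ιgl N (E a d) else 0) -
        (if d = a then ιgl N (E c b) else 0) := by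
  have hlie : ιgl N (E a b) * ιgl N (E c d) - ιgl N (E c d) * ιgl N (E a b) =
      ιgl N (E a b * E c d - E c d * E a b) := by
    simp only [ιgl, ← Ring.lie_def, LieHom.map_lie]
  simp only [E_mul_E, ιgl, map_sub, apply_ite (UniversalEnvelopingAlgebra.ι ℂ), map_zero]
    at hlie ⊢
  rw [add_sub_assoc, ← hlie]
  abel

section Contraction

variable {ι : Type*} [DecidableEq ι] (N : ℕ)

/-- `π` with `c` cut out of its cycle: the preimage of `c` is sent to `π c`. -/
def contractPerm (π : Perm ι) (c : ι) : Perm {x // x ≠ c} :=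
  (swap c (π c) * π).subtypePerm fun _ =>
    not_congr <| (swap c (π c) * π).injective.eq_iff' (by simp [swap_apply_right])

lemma coe_contractPerm (π : Perm ι) (c : ι) (z : {x // x ≠ c}) :
    (contractPerm π c z : ι) = if π z = c then π c else π z := by
  simp [contractPerm, swap_apply_def, π.injective.ne z.2]

lemma wordTerm_map_val_contractPerm {π : Perm ι} {c : ι} {i : ι → Fin N} (h : i (π c) = i c)
    (t : List {x // x ≠ c}) :
    wordTerm N i (t.map (↑)) π = wordTerm N (fun z : {x // x ≠ c} => i z) t (contractPerm π c) := by
  rw [wordTerm, wordTerm, List.map_map]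
  refine congrArg List.prod <| List.map_congr_left fun z _ => ?_
  simp only [Function.comp, coe_contractPerm]
  split_ifs with hz <;> simp [hz, h]

variable [Fintype ι]

noncomputable def contractedSum (π : Perm ι) (c : ι) (s : List ι) : 𝓤 N :=
  ∑ i : ι → Fin N, if i (π c) = i c then wordTerm N i s π else 0

lemma contractedSum_map_val (π : Perm ι) (c : ι) (t : List {x // x ≠ c}) :
    contractedSum N π c (t.map (↑)) =
      (if π c = c then (N : 𝓤 N) else 1) * wordSum N t (contractPerm π c) := by
  have hrestrict : contractedSum N π c (t.map (↑)) = ∑ i : ι → Fin N,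
      if i (π c) = i c then wordTerm N (fun z : {x // x ≠ c} => i z) t (contractPerm π c) else 0 :=
    Finset.sum_congr rfl fun i _ => by
      split_ifs with h
      · exact wordTerm_map_val_contractPerm N h t
      · rfl
  rw [hrestrict]
  split_ifs with hc
  · refine (Fintype.sum_equiv (funSplitAt c (Fin N)) _
      (fun x => wordTerm N x.2 t (contractPerm π c)) fun i => by simp [hc]).trans ?_
    simp only [Fintype.sum_prod_type, Finset.sum_const, Finset.card_univ, Fintype.card_fin,
      nsmul_eq_mul, wordSum]
  · refine (Fintype.sum_equiv (funSplitAt c (Fin N)) _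
      (fun x => if x.2 ⟨π c, hc⟩ = x.1 then wordTerm N x.2 t (contractPerm π c) else 0)
      fun i => rfl).trans ?_
    simp [Fintype.sum_prod_type_right, wordSum]

lemma wordSum_swap_adjacent (σ : Perm ι) {p q : List ι} {a c : ι}
    (hnd : (p ++ a :: c :: q).Nodup) :
    wordSum N (p ++ a :: c :: q) σ = wordSum N (p ++ c :: a :: q) σ +
      contractedSum N (σ * swap a c) c (p ++ a :: q) -
        contractedSum N (σ * swap a c) a (p ++ c :: q) := by
  obtain ⟨ha, hnd'⟩ := List.nodup_cons.1 (List.nodup_middle.1 hnd)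
  have hc := (List.nodup_cons.1 (List.nodup_middle.1 hnd')).1
  have hπ : ∀ z ∈ p ++ q, (σ * swap a c) z = σ z := fun z hz => by
    rw [Perm.mul_apply, swap_apply_of_ne_of_ne (by rintro rfl; simp_all) (by rintro rfl; simp_all)]
  rw [wordSum, wordSum, contractedSum, contractedSum, ← Finset.sum_add_distrib,
    ← Finset.sum_sub_distrib]
  refine Finset.sum_congr rfl fun i _ => ?_
  have hcontract : ∀ z w, z ∉ p ++ q → (σ * swap a c) z = σ w →
      wordTerm N i (p ++ z :: q) (σ * swap a c) =
        wordTerm N i p σ * (ιgl N (E (i z) (i (σ w))) * wordTerm N i q σ) := fun z w hz hzw => by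
    rw [wordTerm_append_cons, hzw, wordTerm_congr N i fun x hx => hπ x (by simp [hx]),
      wordTerm_congr N i fun x hx => hπ x (by simp [hx])]
  have hπa : (σ * swap a c) a = σ c := by simp
  have hπc : (σ * swap a c) c = σ a := by simp
  rw [hπa, hπc, hcontract a c (by simp at ha ⊢; tauto) hπa, hcontract c a hc hπc]
  simp only [wordTerm_append_cons, wordTerm_cons]
  rw [← mul_assoc (ιgl N _), ιgl_E_mul_ιgl_E]
  split_ifs <;> noncomm_ring

lemma contractedSum_mem {m : ℕ} (π : Perm ι) (c : ι)
    {s : List ι} (hnd : (c :: s).Nodup) (hs : ∀ x, x ∈ c :: s)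
    (h : ∀ (τ : Perm {x // x ≠ c}) (t : List {x // x ≠ c}), t.Nodup → (∀ x, x ∈ t) →
      (fun N => wordSum N t τ) ∈ casimirPolynomials m) :
    (fun N => contractedSum N π c s) ∈ casimirPolynomials m := by
  have hsc : ∀ x ∈ s, x ≠ c := fun x hx hxc => (List.nodup_cons.1 hnd).1 (hxc ▸ hx)
  have hts : (s.attachWith _ hsc).map (↑) = s := List.attachWith_map_subtype_val hsc
  have hmem := h (contractPerm π c) (s.attachWith _ hsc)
    (List.Nodup.of_map Subtype.val (by rw [hts]; exact (List.nodup_cons.1 hnd).2))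
    fun x => (List.mem_attachWith _ _).2 ((List.mem_cons.1 (hs x)).resolve_left x.2)
  rw [← hts]
  simp_rw [contractedSum_map_val]
  split_ifs
  · exact natCast_mul_mem_casimirPolynomials hmem
  · simpa using hmem

lemma wordSum_sub_wordSum_swap_mem {m : ℕ} (σ : Perm ι) {p q : List ι} {a c : ι}
    (hnd : (p ++ a :: c :: q).Nodup) (hs : ∀ x, x ∈ p ++ a :: c :: q)
    (h : ∀ (c : ι) (τ : Perm {x // x ≠ c}) (t : List {x // x ≠ c}), t.Nodup → (∀ x, x ∈ t) →
      (fun N => wordSum N t τ) ∈ casimirPolynomials m) :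
    (fun N => wordSum N (p ++ a :: c :: q) σ) - (fun N => wordSum N (p ++ c :: a :: q) σ) ∈
      casimirPolynomials m := by
  have hc : (c :: (p ++ a :: q)).Perm (p ++ a :: c :: q) := by
    simpa using (List.perm_middle (a := c) (l₁ := p ++ [a]) (l₂ := q)).symm
  have ha : (a :: (p ++ c :: q)).Perm (p ++ a :: c :: q) := List.perm_middle.symm
  have heq : (fun N => wordSum N (p ++ a :: c :: q) σ) - (fun N => wordSum N (p ++ c :: a :: q) σ)
      = (fun N => contractedSum N (σ * swap a c) c (p ++ a :: q)) -
        fun N => contractedSum N (σ * swap a c) a (p ++ c :: q) := by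
    funext N
    simp only [Pi.sub_apply, wordSum_swap_adjacent N σ hnd]
    abel
  rw [heq]
  exact sub_mem
    (contractedSum_mem _ c (hc.nodup_iff.2 hnd) (fun x => hc.mem_iff.2 (hs x)) (h c))
    (contractedSum_mem _ a (ha.nodup_iff.2 hnd) (fun x => ha.mem_iff.2 (hs x)) (h a))

end Contraction

section Orbits

variable {ι : Type*}

noncomputable def orbitEquiv [Finite ι] (σ : Perm ι) (x : ι) :
    Fin (minimalPeriod σ x) ≃ {y // σ.SameCycle x y} :=
  Equiv.ofBijective (fun j => ⟨(σ ^ (j : ℕ)) x, Perm.sameCycle_pow_right.2 (.refl σ x)⟩)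
    ⟨fun j j' h => Fin.ext <| by
      simpa [Perm.coe_pow, iterate_eq_iterate_iff_of_lt_minimalPeriod j.2 j'.2] using h,
    fun ⟨y, hy⟩ => by
      obtain ⟨n, rfl⟩ := hy.exists_nat_pow_eq
      exact ⟨⟨n % minimalPeriod σ x, Nat.mod_lt _ (minimalPeriod_pos_of_mem_periodicPts
        (σ.injective.mem_periodicPts x))⟩, by simp [Perm.coe_pow, iterate_mod_minimalPeriod_eq]⟩⟩

lemma wordSum_orbit [Fintype ι] [DecidableEq ι] (N : ℕ) (σ : Perm ι) (x : ι) :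
    wordSum N ((List.finRange _).map (orbitEquiv σ x))
      (σ.subtypePerm fun _ => Perm.sameCycle_apply_right) = casimir N (minimalPeriod σ x) :=
  wordSum_map_equiv_finRotate N _ fun j => Subtype.ext <| by
    simpa [orbitEquiv, Perm.coe_pow] using iterate_finRotate j

lemma minimalPeriod_subtypePerm {p : ι → Prop} (σ : Perm ι) (h : ∀ x, p (σ x) ↔ p x)
    (y : {x // p x}) : minimalPeriod (σ.subtypePerm h) y = minimalPeriod σ y :=
  minimalPeriod_eq_minimalPeriod_iff.2 fun n => by
    simp [IsPeriodicPt, IsFixedPt, Subtype.ext_iff, ← Perm.coe_pow, Perm.subtypePerm_pow]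

end Orbits

/-- Peeling off the cycle of a point of minimal period first makes the Casimir indices come out
sorted, which is the order in which `evalAtCasimirs` multiplies its factors. -/
theorem exists_wordSum_eq_prod_casimir {ι : Type*} [Fintype ι] [DecidableEq ι] (σ : Perm ι) :
    ∃ (s : List ι) (ks : List ℕ), s.Nodup ∧ (∀ x, x ∈ s) ∧ ks.Pairwise (· ≤ ·) ∧
      (∀ k ∈ ks, ∃ x, minimalPeriod σ x = k) ∧ ∀ N, wordSum N s σ = (ks.map (casimir N)).prod := by
  induction hn : Fintype.card ι using Nat.strong_induction_on generalizing ι with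
  | _ n ih =>
  rcases isEmpty_or_nonempty ι with hι | hι
  · exact ⟨[], [], List.nodup_nil, isEmptyElim, .nil, by simp, fun N => by simp [wordSum, wordTerm]⟩
  obtain ⟨x, -, hx⟩ := Finset.exists_min_image Finset.univ (minimalPeriod σ) Finset.univ_nonempty
  have hp : ∀ y, σ.SameCycle x (σ y) ↔ σ.SameCycle x y := fun _ => Perm.sameCycle_apply_right
  have hcard : Fintype.card {y // ¬ σ.SameCycle x y} < n :=
    hn ▸ Fintype.card_subtype_lt (not_not.2 (Perm.SameCycle.refl σ x))
  obtain ⟨s, ks, hnd, hs, hsort, hks, hWS⟩ :=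
    ih _ hcard (σ.subtypePerm fun y => not_congr (hp y)) rfl
  have hks' : ∀ k ∈ ks, ∃ y, minimalPeriod σ y = k := fun k hk => by
    obtain ⟨y, rfl⟩ := hks k hk
    exact ⟨y, (minimalPeriod_subtypePerm _ _ y).symm⟩
  refine ⟨((List.finRange _).map (orbitEquiv σ x)).map (↑) ++ s.map (↑),
    minimalPeriod σ x :: ks, ?_, fun y => ?_, ?_, ?_, fun N => ?_⟩
  · refine List.nodup_append.2 ⟨(((List.nodup_finRange _).map (orbitEquiv σ x).injective).map
      Subtype.val_injective), hnd.map Subtype.val_injective, ?_⟩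
    simp only [List.mem_map]
    rintro _ ⟨y, -, rfl⟩ _ ⟨z, -, rfl⟩ h
    exact z.2 (h ▸ y.2)
  · by_cases hy : σ.SameCycle x y
    · refine List.mem_append_left _ (List.mem_map.2 ⟨⟨y, hy⟩, List.mem_map.2 ?_, rfl⟩)
      exact ⟨(orbitEquiv σ x).symm ⟨y, hy⟩, List.mem_finRange _, Equiv.apply_symm_apply _ _⟩
    · exact List.mem_append_right _ (List.mem_map.2 ⟨⟨y, hy⟩, hs _, rfl⟩)
  · refine List.pairwise_cons.2 ⟨fun k hk => ?_, hsort⟩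
    obtain ⟨y, rfl⟩ := hks' k hk
    exact hx y (Finset.mem_univ y)
  · exact List.forall_mem_cons.2 ⟨⟨x, rfl⟩, hks'⟩
  · rw [wordSum_append_subtype N _ σ hp, wordSum_orbit, hWS, List.map_cons, List.prod_cons]

theorem wordSum_mem_casimirPolynomials {m : ℕ} {ι : Type*} [Fintype ι] [DecidableEq ι]
    (hm : Fintype.card ι ≤ m) (σ : Perm ι) {s : List ι} (hnd : s.Nodup) (hs : ∀ x, x ∈ s) :
    (fun N => wordSum N s σ) ∈ casimirPolynomials m := by
  induction hn : Fintype.card ι using Nat.strong_induction_on generalizing ι with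
  | _ n ih =>
  have hswap : ∀ p q a c, (p ++ a :: c :: q).Perm s →
      (fun N => wordSum N (p ++ a :: c :: q) σ) - (fun N => wordSum N (p ++ c :: a :: q) σ) ∈
        casimirPolynomials m := fun p q a c h =>
    wordSum_sub_wordSum_swap_mem σ (h.nodup_iff.2 hnd) (fun x => h.mem_iff.2 (hs x))
      fun c τ t hnd' hs' => ih _ (hn ▸ Fintype.card_subtype_lt (not_not.2 rfl))
        ((Fintype.card_subtype_le _).trans hm) τ hnd' hs' rfl
  obtain ⟨s₀, ks, hnd₀, hs₀, hsort, hks, hWS⟩ := exists_wordSum_eq_prod_casimir σ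
  have hperm : s.Perm s₀ := (List.perm_ext_iff_of_nodup hnd hnd₀).2 fun x => by simp [hs, hs₀]
  have hcasimir : (fun N => wordSum N s₀ σ) ∈ casimirPolynomials m := by
    simp only [hWS]
    refine prod_casimir_mem_casimirPolynomials hsort fun k hk => ?_
    obtain ⟨x, rfl⟩ := hks k hk
    exact ⟨minimalPeriod_pos_of_mem_periodicPts (σ.injective.mem_periodicPts x),
      minimalPeriod_le_card.trans (hn ▸ hm)⟩
  simpa using add_mem (hperm.sub_mem_of_swap (F := fun l N => wordSum N l σ) hswap .rfl) hcasimir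

end WglUniversal

/-- Universality: for every permutation `σ` of `{1,…,m}` there is a single polynomial `P`
with integer coefficients in the `m+1` variables `y, x_1, …, x_m` such that for every
`N ≥ 1`, `w_{gl_N}(σ) = P(N·1, C_1, …, C_m)` in `U(gl_N)`; `P` does not depend on `N`. -/
theorem wgl_universal (m : ℕ) (σ : Equiv.Perm (Fin m)) :
    ∃ P : MvPolynomial (Fin (m + 1)) ℤ,
      ∀ N : ℕ, 1 ≤ N → wgl N m σ = evalAtCasimirs N m P := by
  obtain ⟨P, hP⟩ := WglUniversal.wordSum_mem_casimirPolynomials (Fintype.card_fin m).le σ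
    (List.nodup_finRange m) List.mem_finRange
  exact ⟨P, fun N _ => by rw [WglUniversal.wgl_eq_wordSum]; exact (congrFun hP N).symm⟩
end

section
/- In U(gl_N): w_{gl_N}(K_2) = C_2² + C_1² − N·C_2. -/
open scoped BigOperators

attribute [local instance 100] LieRing.ofAssociativeRing

/-- The fixed-point-free involution `K_n` of `{1,…,2n}` sending `j` to `j + n` for
`1 ≤ j ≤ n` and `j` to `j − n` for `n + 1 ≤ j ≤ 2n`: the chord diagram with `n`
pairwise intersecting chords. -/
def Kperm (n : ℕ) : Equiv.Perm (Fin (n + n)) := finAddFlip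

noncomputable def ee (N : ℕ) (a b : Fin N) : UniversalEnvelopingAlgebra ℂ (gl N) :=
  ιgl N (E a b)

lemma Emul {N : ℕ} (a b c d : Fin N) : (E a b) * (E c d) = if b = c then E a d else 0 := by
  by_cases h : b = c
  · subst h; simp [E]
  · simp [E, h]

lemma ee_comm (N : ℕ) (a b c d : Fin N) :
    ee N a b * ee N c d = ee N c d * ee N a b
      + ((if b = c then ee N a d else 0) - (if d = a then ee N c b else 0)) := by
  have h1 : ee N a b * ee N c d - ee N c d * ee N a b = ιgl N ⁅E a b, E c d⁆ := by
    rw [ee, ee, ιgl, ιgl, ιgl, LieHom.map_lie, Ring.lie_def]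
  have h2 : ⁅E a b, E c d⁆ = (if b = c then E a d else 0) - (if d = a then E c b else 0) := by
    rw [Ring.lie_def, Emul, Emul]
  rw [h2] at h1
  have h3 : ιgl N ((if b = c then E a d else 0) - (if d = a then E c b else 0))
      = (if b = c then ee N a d else 0) - (if d = a then ee N c b else 0) := by
    simp [ιgl, ee, apply_ite (UniversalEnvelopingAlgebra.ι ℂ (L := gl N)), map_sub]
  rw [h3] at h1
  rw [← h1]; abel

def eqv2 (N : ℕ) : (Fin N × Fin N) ≃ (Fin 2 → Fin N) where
  toFun p := ![p.1, p.2]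
  invFun i := (i 0, i 1)
  left_inv p := rfl
  right_inv i := by funext t; fin_cases t <;> rfl

def eqv4 (N : ℕ) : (Fin N × Fin N × Fin N × Fin N) ≃ (Fin 4 → Fin N) where
  toFun p := ![p.1, p.2.1, p.2.2.1, p.2.2.2]
  invFun i := (i 0, i 1, i 2, i 3)
  left_inv p := rfl
  right_inv i := by funext t; fin_cases t <;> rfl

lemma sum_fin2 {M : Type*} [AddCommMonoid M] {N : ℕ} (F : Fin N → Fin N → M) :
    ∑ i : Fin 2 → Fin N, F (i 0) (i 1) = ∑ a, ∑ b, F a b := by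
  rw [← (eqv2 N).sum_comp (fun i => F (i 0) (i 1))]
  simp only [eqv2, Equiv.coe_fn_mk, Matrix.cons_val_zero, Matrix.cons_val_one, Matrix.head_cons]
  rw [Fintype.sum_prod_type]
  rfl

lemma sum_fin4 {M : Type*} [AddCommMonoid M] {N : ℕ} (F : Fin N → Fin N → Fin N → Fin N → M) :
    ∑ i : Fin 4 → Fin N, F (i 0) (i 1) (i 2) (i 3) = ∑ a, ∑ b, ∑ c, ∑ d, F a b c d := by
  rw [← (eqv4 N).sum_comp (fun i => F (i 0) (i 1) (i 2) (i 3))]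
  simp only [eqv4, Equiv.coe_fn_mk, Matrix.cons_val_zero, Matrix.cons_val_one, Matrix.head_cons,
    Matrix.cons_val_two, Matrix.cons_val_three, Matrix.tail_cons, Matrix.head_fin_const]
  rw [Fintype.sum_prod_type]
  refine Finset.sum_congr rfl fun a _ => ?_
  rw [Fintype.sum_prod_type]
  refine Finset.sum_congr rfl fun b _ => ?_
  rw [Fintype.sum_prod_type]
  rfl

lemma prod4 {M : Type*} [Monoid M] (f : Fin 4 → M) :
    (List.ofFn f).prod = f 0 * f 1 * f 2 * f 3 := by
  simp [List.ofFn_succ, mul_assoc]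

lemma prod2 {M : Type*} [Monoid M] (f : Fin 2 → M) :
    (List.ofFn f).prod = f 0 * f 1 := by
  simp [List.ofFn_succ]

lemma sum_fin1 {M : Type*} [AddCommMonoid M] {N : ℕ} (F : Fin N → M) :
    ∑ i : Fin 1 → Fin N, F (i 0) = ∑ a, F a :=
  Fintype.sum_equiv (Equiv.funUnique (Fin 1) (Fin N)) _ _ (fun _ => rfl)

lemma sum4_perm {M : Type*} [AddCommMonoid M] {N : ℕ} (F : Fin N → Fin N → Fin N → Fin N → M) :
    ∑ a, ∑ b, ∑ c, ∑ d, F a b c d = ∑ b, ∑ d, ∑ a, ∑ c, F a b c d := by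
  rw [Finset.sum_comm]
  refine Finset.sum_congr rfl fun b _ => ?_
  rw [show (∑ a, ∑ c, ∑ d, F a b c d) = ∑ a, ∑ d, ∑ c, F a b c d from
    Finset.sum_congr rfl fun a _ => Finset.sum_comm]
  exact Finset.sum_comm

lemma casimir_one_s7 (N : ℕ) : casimir N 1 = ∑ a, ee N a a := by
  rw [casimir, wgl]
  rw [show (∑ i : Fin 1 → Fin N, (List.ofFn fun t : Fin 1 => ιgl N (E (i t) (i ((finRotate 1) t)))).prod)
      = ∑ i : Fin 1 → Fin N, ee N (i 0) (i 0) from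
    Finset.sum_congr rfl fun i _ => by simp [List.ofFn_succ, ee, finRotate_one]]
  exact sum_fin1 (fun a => ee N a a)

lemma casimir_two (N : ℕ) : casimir N 2 = ∑ a, ∑ b, ee N a b * ee N b a := by
  rw [casimir, wgl, ← sum_fin2 (fun a b => ee N a b * ee N b a)]
  refine Finset.sum_congr rfl fun i _ => ?_
  have h0 : finRotate 2 0 = 1 := by decide
  have h1 : finRotate 2 1 = 0 := by decide
  rw [prod2, h0, h1]; rfl


/-- `w_{gl_N}(K_2) = C_2² + C_1² − N·C_2`. -/
theorem wgl_K2 (N : ℕ) (hN : 1 ≤ N) :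
    let NN : UniversalEnvelopingAlgebra ℂ (gl N) := (N : ℕ)
    let C1 := casimir N 1
    let C2 := casimir N 2
    wgl N (2 + 2) (Kperm 2) = C2 ^ 2 + C1 ^ 2 - NN * C2 := by
  intro NN C1 C2
  have hw : wgl N (2 + 2) (Kperm 2)
      = ∑ a, ∑ b, ∑ c, ∑ d, ee N a c * ee N b d * ee N c a * ee N d b := by
    rw [wgl, ← sum_fin4 (fun a b c d => ee N a c * ee N b d * ee N c a * ee N d b)]
    refine Finset.sum_congr rfl fun i _ => ?_
    have h0 : Kperm 2 0 = 2 := by decide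
    have h1 : Kperm 2 1 = 3 := by decide
    have h2 : Kperm 2 2 = 0 := by decide
    have h3 : Kperm 2 3 = 1 := by decide
    rw [prod4, h0, h1, h2, h3]
    rfl
  -- pointwise first commutation
  have key : ∀ a b c d : Fin N, ee N a c * ee N b d * ee N c a * ee N d b
      = ee N a c * ee N c a * (ee N b d * ee N d b)
        + ((if d = c then ee N a c * ee N b a * ee N d b else 0)
          - (if a = b then ee N a c * ee N c d * ee N d b else 0)) := by
    intro a b c d
    have h := ee_comm N b d c a
    calc ee N a c * ee N b d * ee N c a * ee N d b
        = ee N a c * (ee N b d * ee N c a) * ee N d b := by noncomm_ring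
      _ = ee N a c * (ee N c a * ee N b d
            + ((if d = c then ee N b a else 0) - (if a = b then ee N c d else 0))) * ee N d b := by
          rw [h]
      _ = ee N a c * ee N c a * (ee N b d * ee N d b)
            + ((if d = c then ee N a c * ee N b a * ee N d b else 0)
              - (if a = b then ee N a c * ee N c d * ee N d b else 0)) := by
          split_ifs <;> noncomm_ring
  rw [hw]
  simp only [key]
  rw [show (∑ a, ∑ b, ∑ c, ∑ d,
      (ee N a c * ee N c a * (ee N b d * ee N d b)
        + ((if d = c then ee N a c * ee N b a * ee N d b else 0)
          - (if a = b then ee N a c * ee N c d * ee N d b else 0))))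
    = (∑ a, ∑ b, ∑ c, ∑ d, ee N a c * ee N c a * (ee N b d * ee N d b))
      + ((∑ a, ∑ b, ∑ c, ∑ d, (if d = c then ee N a c * ee N b a * ee N d b else 0))
        - (∑ a, ∑ b, ∑ c, ∑ d, (if a = b then ee N a c * ee N c d * ee N d b else 0))) by
    simp only [Finset.sum_add_distrib, Finset.sum_sub_distrib]]
  have hS1 : (∑ a, ∑ b, ∑ c, ∑ d, ee N a c * ee N c a * (ee N b d * ee N d b))
      = C2 * C2 := by
    show _ = casimir N 2 * casimir N 2
    rw [sum4_perm (fun a b c d => ee N a c * ee N c a * (ee N b d * ee N d b)), casimir_two]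
    simp only [Finset.sum_mul, Finset.mul_sum]
  have hS2 : (∑ a, ∑ b, ∑ c, ∑ d, (if d = c then ee N a c * ee N b a * ee N d b else 0))
      = ∑ a, ∑ b, ∑ c, ee N a c * ee N b a * ee N c b := by
    simp [Finset.sum_ite_eq']
  have hS3 : (∑ a, ∑ b, ∑ c, ∑ d, (if a = b then ee N a c * ee N c d * ee N d b else 0))
      = ∑ a, ∑ c, ∑ d, ee N a c * ee N c d * ee N d a := by
    refine Finset.sum_congr rfl fun a _ => ?_
    have : ∀ b : Fin N, (∑ c, ∑ d, (if a = b then ee N a c * ee N c d * ee N d b else 0))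
        = if a = b then (∑ c, ∑ d, ee N a c * ee N c d * ee N d b) else 0 := by
      intro b; split_ifs <;> simp
    simp only [this]
    simp [Finset.sum_ite_eq]
  -- second commutation, for the triple sum
  have key2 : ∀ a b c : Fin N, ee N a c * ee N b a * ee N c b
      = ee N b a * ee N a c * ee N c b
        + ((if c = b then ee N a a * ee N c b else 0) - ee N b c * ee N c b) := by
    intro a b c
    have h := ee_comm N a c b a
    rw [if_pos rfl] at h
    calc ee N a c * ee N b a * ee N c b
        = (ee N b a * ee N a c + ((if c = b then ee N a a else 0) - ee N b c)) * ee N c b := by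
          rw [h]
      _ = ee N b a * ee N a c * ee N c b
            + ((if c = b then ee N a a * ee N c b else 0) - ee N b c * ee N c b) := by
          split_ifs <;> noncomm_ring
  have hT : (∑ a, ∑ b, ∑ c, ee N a c * ee N b a * ee N c b)
      = (∑ a, ∑ c, ∑ d, ee N a c * ee N c d * ee N d a) + (C1 * C1 - NN * C2) := by
    simp only [key2]
    rw [show (∑ a, ∑ b, ∑ c,
        (ee N b a * ee N a c * ee N c b
          + ((if c = b then ee N a a * ee N c b else 0) - ee N b c * ee N c b)))
      = (∑ a, ∑ b, ∑ c, ee N b a * ee N a c * ee N c b)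
        + ((∑ a, ∑ b, ∑ c, (if c = b then ee N a a * ee N c b else 0))
          - (∑ _a : Fin N, ∑ b, ∑ c, ee N b c * ee N c b)) by
      simp only [Finset.sum_add_distrib, Finset.sum_sub_distrib]]
    have h1 : (∑ a, ∑ b, ∑ c : Fin N, ee N b a * ee N a c * ee N c b)
        = ∑ a, ∑ c, ∑ d, ee N a c * ee N c d * ee N d a := by
      rw [Finset.sum_comm]
    have h2 : (∑ a, ∑ b, ∑ c, (if c = b then ee N a a * ee N c b else 0)) = C1 * C1 := by
      show _ = casimir N 1 * casimir N 1
      rw [casimir_one_s7, Finset.sum_mul_sum]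
      simp [Finset.sum_ite_eq']
    have h3 : (∑ _a : Fin N, ∑ b, ∑ c, ee N b c * ee N c b) = NN * C2 := by
      rw [Finset.sum_const, Finset.card_univ, Fintype.card_fin, nsmul_eq_mul]
      show _ = _ * casimir N 2
      rw [casimir_two]
    simp only [h1, h2, h3]
  rw [hS1, hS2, hS3, hT]
  have : C2 ^ 2 = C2 * C2 := sq C2
  rw [this, sq C1]
  abel
end

section
/- In U(gl_N): w_{gl_N}(K_3) = 2·C_2·N² − (2·C_1² + 3·C_2²)·N + C_2³ + 3·C_1²·C_2. -/
open scoped BigOperators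

attribute [local instance 100] LieRing.ofAssociativeRing

set_option linter.unusedVariables false

namespace WK3
variable {N : ℕ}

noncomputable def X {N : ℕ} (i j : Fin N) : UniversalEnvelopingAlgebra ℂ (gl N) := ιgl N (E i j)

lemma E_mul (i j k l : Fin N) : (E i j : gl N) * E k l = if j = k then E i l else 0 := by
  by_cases h : j = k
  · subst h; simp [E]
  · simp [E, h]

lemma X_comm (i j k l : Fin N) :
    X i j * X k l = X k l * X i j + (if j = k then X i l else 0)
      - (if l = i then X k j else 0) := by
  have h := (UniversalEnvelopingAlgebra.ι ℂ (L := gl N)).map_lie (E i j) (E k l)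
  rw [Ring.lie_def, Ring.lie_def, E_mul, E_mul] at h
  have h2 : X i j * X k l - X k l * X i j
      = (if j = k then X i l else 0) - (if l = i then X k j else 0) := by
    rw [show X i j * X k l - X k l * X i j = ((UniversalEnvelopingAlgebra.ι ℂ) (E i j) *
       (UniversalEnvelopingAlgebra.ι ℂ) (E k l) -
      (UniversalEnvelopingAlgebra.ι ℂ) (E k l) * (UniversalEnvelopingAlgebra.ι ℂ) (E i j)) from rfl,
      ← h]
    simp only [X, ιgl]
    split_ifs <;> simp
  rw [sub_eq_iff_eq_add] at h2
  rw [h2]; abel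

lemma sum_fn_succ {M : Type*} [AddCommMonoid M] {n : ℕ} (f : (Fin (n+1) → Fin N) → M) :
    ∑ g : Fin (n+1) → Fin N, f g
      = ∑ x : Fin N, ∑ g : Fin n → Fin N, f (Fin.cons x g) := by
  rw [← Equiv.sum_comp (Fin.consEquiv (fun _ => Fin N)) f, Fintype.sum_prod_type]
  rfl

lemma wgl6 : wgl N (3+3) (Kperm 3)
    = ∑ a, ∑ b, ∑ c, ∑ d, ∑ e, ∑ f,
        X a d * X b e * X c f * X d a * X e b * X f c := by
  rw [wgl]
  rw [sum_fn_succ]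
  simp only [sum_fn_succ, Fintype.sum_unique]
  apply Finset.sum_congr rfl; intro a _
  apply Finset.sum_congr rfl; intro b _
  apply Finset.sum_congr rfl; intro c _
  apply Finset.sum_congr rfl; intro d _
  apply Finset.sum_congr rfl; intro e _
  apply Finset.sum_congr rfl; intro f _
  have h : X a d * X b e * X c f * X d a * X e b * X f c
      = ιgl N (E a d) * (ιgl N (E b e) * (ιgl N (E c f) * (ιgl N (E d a) *
          (ιgl N (E e b) * (ιgl N (E f c) * 1))))) := by
    simp [X, mul_assoc]
  rw [h]; rfl

lemma casimir1 : casimir N 1 = ∑ a, X a a := by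
  rw [casimir, wgl, sum_fn_succ]
  simp only [Fintype.sum_unique]
  apply Finset.sum_congr rfl; intro a _
  show (List.ofFn _).prod = _
  simp only [List.ofFn_succ, List.ofFn_zero, List.prod_cons, List.prod_nil, mul_one]
  rfl

lemma casimir2 : casimir N 2 = ∑ a, ∑ b, X a b * X b a := by
  rw [casimir, wgl, sum_fn_succ]
  simp only [sum_fn_succ, Fintype.sum_unique]
  apply Finset.sum_congr rfl; intro a _
  apply Finset.sum_congr rfl; intro b _
  show (List.ofFn _).prod = _
  have h : X a b * X b a = ιgl N (E a b) * (ιgl N (E b a) * 1) := by simp [X, mul_assoc]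
  rw [h]; rfl

noncomputable abbrev U (N : ℕ) := UniversalEnvelopingAlgebra ℂ (gl N)
noncomputable def c1 : U N := ∑ a, X a a
noncomputable def c2 : U N := ∑ a, ∑ b, X a b * X b a
noncomputable def c3 : U N := ∑ a, ∑ b, ∑ c, X a b * X b c * X c a
noncomputable def c4 : U N := ∑ a, ∑ b, ∑ c, ∑ d, X a b * X b c * X c d * X d a
noncomputable def nn (N : ℕ) : U N := (N : ℕ)

-- congruence helper
lemma sumc {α M : Type*} [AddCommMonoid M] {s : Finset α} {f g : α → M}
    (h : ∀ x, f x = g x) : ∑ x ∈ s, f x = ∑ x ∈ s, g x :=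
  Finset.sum_congr rfl fun x _ => h x

-- sum commutation helpers
lemma comm2 {M : Type*} [AddCommMonoid M] (f : Fin N → Fin N → M) :
    ∑ a, ∑ b, f a b = ∑ b, ∑ a, f a b := Finset.sum_comm

lemma comm3_12 {M : Type*} [AddCommMonoid M] (f : Fin N → Fin N → Fin N → M) :
    ∑ a, ∑ b, ∑ c, f a b c = ∑ b, ∑ a, ∑ c, f a b c := Finset.sum_comm

lemma comm3_23 {M : Type*} [AddCommMonoid M] (f : Fin N → Fin N → Fin N → M) :
    ∑ a, ∑ b, ∑ c, f a b c = ∑ a, ∑ c, ∑ b, f a b c := sumc fun a => Finset.sum_comm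

lemma comm3_r {M : Type*} [AddCommMonoid M] (f : Fin N → Fin N → Fin N → M) :
    ∑ a, ∑ b, ∑ c, f a b c = ∑ b, ∑ c, ∑ a, f a b c := by
  rw [comm3_12, comm3_23]

lemma comm3_l {M : Type*} [AddCommMonoid M] (f : Fin N → Fin N → Fin N → M) :
    ∑ a, ∑ b, ∑ c, f a b c = ∑ c, ∑ a, ∑ b, f a b c := by
  rw [comm3_23, comm3_12]

lemma comm4_12 {M : Type*} [AddCommMonoid M] (f : Fin N → Fin N → Fin N → Fin N → M) :
    ∑ a, ∑ b, ∑ c, ∑ d, f a b c d = ∑ b, ∑ a, ∑ c, ∑ d, f a b c d := Finset.sum_comm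

lemma comm4_23 {M : Type*} [AddCommMonoid M] (f : Fin N → Fin N → Fin N → Fin N → M) :
    ∑ a, ∑ b, ∑ c, ∑ d, f a b c d = ∑ a, ∑ c, ∑ b, ∑ d, f a b c d :=
  sumc fun a => Finset.sum_comm

lemma comm4_34 {M : Type*} [AddCommMonoid M] (f : Fin N → Fin N → Fin N → Fin N → M) :
    ∑ a, ∑ b, ∑ c, ∑ d, f a b c d = ∑ a, ∑ b, ∑ d, ∑ c, f a b c d :=
  sumc fun a => sumc fun b => Finset.sum_comm

-- centrality of c1 and c2 w.r.t. generators
lemma c1X (i j : Fin N) : c1 * X i j = X i j * c1 := by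
  rw [c1, Finset.sum_mul, Finset.mul_sum]
  have hpt : ∀ b, X b b * X i j
      = X i j * X b b + (if b = i then X b j else 0) - (if j = b then X i b else 0) := by
    intro b; rw [X_comm b b i j]
  simp only [hpt, Finset.sum_add_distrib, Finset.sum_sub_distrib, Finset.sum_ite_eq,
    Finset.sum_ite_eq', Finset.mem_univ, if_true]
  abel

lemma c2X (i j : Fin N) : c2 * X i j = X i j * c2 := by
  have hpt : ∀ a b : Fin N, (X a b * X b a) * X i j
      = X i j * (X a b * X b a)
        + (if b = i then X a j * X b a else 0) - (if j = a then X i b * X b a else 0)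
        + (if a = i then X a b * X b j else 0) - (if j = b then X a b * X i a else 0) := by
    intro a b
    have h1 : X b a * X i j = X i j * X b a + (if a = i then X b j else 0)
        - (if j = b then X i a else 0) := X_comm b a i j
    have h2 : X a b * X i j = X i j * X a b + (if b = i then X a j else 0)
        - (if j = a then X i b else 0) := X_comm a b i j
    calc X a b * X b a * X i j = X a b * (X b a * X i j) := by rw [mul_assoc]
      _ = X a b * (X i j * X b a) + (if a = i then X a b * X b j else 0)
          - (if j = b then X a b * X i a else 0) := by
            rw [h1]; split_ifs <;> noncomm_ring
      _ = (X a b * X i j) * X b a + (if a = i then X a b * X b j else 0)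
          - (if j = b then X a b * X i a else 0) := by rw [mul_assoc]
      _ = _ := by rw [h2]; split_ifs <;> noncomm_ring
  rw [c2]
  simp only [Finset.sum_mul, Finset.mul_sum, hpt]
  simp only [Finset.sum_add_distrib, Finset.sum_sub_distrib, Finset.sum_ite_eq,
    Finset.sum_ite_eq', Finset.sum_ite_irrel, Finset.sum_const_zero,
    Finset.mem_univ, if_true]
  abel


lemma comm3_13 {M : Type*} [AddCommMonoid M] (f : Fin N → Fin N → Fin N → M) :
    ∑ a, ∑ b, ∑ c, f a b c = ∑ c, ∑ b, ∑ a, f a b c := by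
  rw [comm3_12, comm3_23, comm3_12]

lemma c2XX (i j k l : Fin N) : c2 * (X i j * X k l) = (X i j * X k l) * c2 := by
  rw [← mul_assoc, c2X, mul_assoc, c2X, ← mul_assoc]

lemma c12 : (c1 : U N) * c2 = c2 * c1 := by
  rw [c2, Finset.mul_sum, Finset.sum_mul]
  apply sumc; intro a
  rw [Finset.mul_sum, Finset.sum_mul]
  apply sumc; intro b
  rw [← mul_assoc, c1X, mul_assoc, c1X, ← mul_assoc]

lemma nnc (x : U N) : x * nn N = nn N * x := ((Nat.cast_commute N x).symm).eq

-- P3 pattern : ∑ [ad][ca][dc]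
lemma P3 : (∑ a, ∑ c, ∑ d, X a d * X c a * X d c : U N)
    = c3 + c1 * c1 - nn N * c2 := by
  have hpt : ∀ a c d : Fin N, X a d * X c a * X d c
      = X c a * X a d * X d c + (if d = c then X a a * X d c else 0)
        - X c d * X d c := by
    intro a c d
    rw [X_comm a d c a]
    simp only [if_pos rfl]
    split_ifs <;> noncomm_ring
  simp only [hpt]
  simp only [Finset.sum_add_distrib, Finset.sum_sub_distrib, Finset.sum_ite_eq',
    Finset.mem_univ, if_true, Finset.sum_const, Finset.card_univ, Fintype.card_fin,
    nsmul_eq_mul]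
  congr 1
  · refine congrArg₂ (· + ·) ?_ ?_
    · rw [c3]; exact Finset.sum_comm
    · rw [c1, Finset.sum_mul_sum]

-- B-lemmas (central factor pulls)
lemma B3a : (∑ a, ∑ b, ∑ d, X a d * X b b * X d a : U N) = c2 * c1 := by
  rw [comm3_23]
  have h1 : ∀ a d : Fin N, ∑ b, X a d * X b b * X d a = (X a d * X d a) * c1 := by
    intro a d
    calc ∑ b, X a d * X b b * X d a = X a d * (c1 * X d a) := by
          rw [c1, Finset.sum_mul, Finset.mul_sum]; exact sumc fun b => mul_assoc _ _ _
      _ = X a d * (X d a * c1) := by rw [c1X]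
      _ = X a d * X d a * c1 := by rw [mul_assoc]
  simp only [h1]
  rw [c2, Finset.sum_mul]
  exact sumc fun a => (Finset.sum_mul _ _ _).symm

lemma B3b : (∑ a, ∑ b, ∑ c, X a b * X c c * X b a : U N) = c2 * c1 := by
  have h1 : ∀ a b : Fin N, ∑ c, X a b * X c c * X b a = (X a b * X b a) * c1 := by
    intro a b
    calc ∑ c, X a b * X c c * X b a = X a b * (c1 * X b a) := by
          rw [c1, Finset.sum_mul, Finset.mul_sum]; exact sumc fun c => mul_assoc _ _ _
      _ = X a b * (X b a * c1) := by rw [c1X]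
      _ = X a b * X b a * c1 := by rw [mul_assoc]
  simp only [h1]
  rw [c2, Finset.sum_mul]
  exact sumc fun a => (Finset.sum_mul _ _ _).symm

lemma B3e : (∑ a, ∑ b, ∑ d, X a d * X d a * X b b : U N) = c2 * c1 := by
  rw [comm3_23]
  have h1 : ∀ a d : Fin N, ∑ b, X a d * X d a * X b b = (X a d * X d a) * c1 := by
    intro a d
    rw [c1, Finset.mul_sum]
  simp only [h1]
  rw [c2, Finset.sum_mul]
  exact sumc fun a => (Finset.sum_mul _ _ _).symm

lemma B1 : (∑ a, ∑ b, ∑ c, X a a * X b c * X c b : U N) = c1 * c2 := by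
  have h1 : ∀ a : Fin N, ∑ b, ∑ c, X a a * X b c * X c b = X a a * c2 := by
    intro a
    rw [c2, Finset.mul_sum]
    apply sumc; intro b
    rw [Finset.mul_sum]
    exact sumc fun c => by rw [mul_assoc]
  simp only [h1]
  rw [c1, Finset.sum_mul]

lemma B3c : (∑ a, ∑ b, ∑ c, X a a * X c b * X b c : U N) = c1 * c2 := by
  rw [comm3_23]; exact B1

-- c3 renames
lemma R3a : (∑ a, ∑ b, ∑ d, X a d * X d b * X b a : U N) = c3 := by
  rw [c3]; exact comm3_23 _

-- c4 renames
lemma R4c4 : (∑ a, ∑ b, ∑ c, ∑ d, X a d * X d c * X c b * X b a : U N) = c4 := by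
  rw [c4]; exact sumc fun a => comm3_13 _

lemma S4c4 : (∑ a, ∑ b, ∑ d, ∑ f, X a d * X d f * X f b * X b a : U N) = c4 := by
  rw [c4]; exact sumc fun a => comm3_r _

lemma U4c4 : (∑ a, ∑ c, ∑ d, ∑ e, X a d * X d e * X e c * X c a : U N) = c4 := by
  rw [c4]; exact sumc fun a => comm3_r _

lemma V4c4 : (∑ a, ∑ c, ∑ d, ∑ e, X a d * X d c * X c e * X e a : U N) = c4 := by
  rw [c4]; exact sumc fun a => comm3_12 _

lemma W4c4 : (∑ a, ∑ b, ∑ d, ∑ e, X a d * X d b * X b e * X e a : U N) = c4 := by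
  rw [c4]; exact sumc fun a => comm3_12 _


-- rfl micro-lemmas
lemma mc1 : (∑ b, X b b : U N) = c1 := rfl
lemma mc2 : (∑ i, ∑ j, X i j * X j i : U N) = c2 := rfl
lemma mc3 : (∑ a, ∑ d, ∑ e, X a d * X d e * X e a : U N) = c3 := rfl
lemma mc4 : (∑ a, ∑ d, ∑ e, ∑ f, X a d * X d e * X e f * X f a : U N) = c4 := rfl
lemma mnn : ((N : ℕ) : U N) = nn N := rfl

-- contraction simp sets are used via `csimp` pattern below

-- K2 : ∑ [be][cf][eb][fc] (right-assoc summand)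
lemma K2A : (∑ b, ∑ c, ∑ e, ∑ f, X b e * (X e b * (X c f * X f c)) : U N) = c2 * c2 := by
  have key : ∀ b e : Fin N, ∑ c, ∑ f, X b e * (X e b * (X c f * X f c))
      = (X b e * X e b) * c2 := by
    intro b e
    rw [← mc2, Finset.mul_sum]
    apply sumc; intro c
    rw [Finset.mul_sum]
    apply sumc; intro f
    rw [mul_assoc]
  rw [show (∑ b, ∑ c, ∑ e, ∑ f, X b e * (X e b * (X c f * X f c)) : U N)
      = ∑ b, ∑ e, ∑ c, ∑ f, X b e * (X e b * (X c f * X f c)) from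
    sumc fun b => comm3_12 _]
  simp only [key]
  rw [← mc2, Finset.sum_mul]
  exact sumc fun b => (Finset.sum_mul _ _ _).symm

lemma K2s : (∑ b, ∑ c, ∑ e, ∑ f, X b e * (X c f * (X e b * X f c)) : U N)
    = c2 * c2 + c1 * c1 - nn N * c2 := by
  have hpt : ∀ b c e f : Fin N, X b e * (X c f * (X e b * X f c))
      = X b e * (X e b * (X c f * X f c))
        + (if f = e then X b e * (X c b * X f c) else 0)
        - (if b = c then X b e * (X e f * X f c) else 0) := by
    intro b c e f
    have h := X_comm c f e b
    calc X b e * (X c f * (X e b * X f c))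
        = X b e * ((X c f * X e b) * X f c) := by noncomm_ring
      _ = _ := by rw [h]; split_ifs <;> noncomm_ring
  simp only [hpt]
  simp only [Finset.sum_add_distrib, Finset.sum_sub_distrib, Finset.sum_ite_irrel,
    Finset.sum_const_zero, Finset.sum_ite_eq, Finset.sum_ite_eq', Finset.mem_univ, if_true]
  rw [K2A]
  have hB : (∑ b, ∑ c, ∑ e, X b e * (X c b * X e c) : U N) = c3 + c1 * c1 - nn N * c2 := by
    rw [← P3]
    exact sumc fun b => sumc fun c => sumc fun e => by rw [mul_assoc]
  rw [hB]
  have hC : (∑ b, ∑ e, ∑ f, X b e * (X e f * X f b) : U N) = c3 := by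
    rw [← mc3]
    exact sumc fun b => sumc fun e => sumc fun f => by rw [mul_assoc]
  rw [hC]
  abel


lemma W4L : (∑ a, ∑ b, ∑ d, ∑ e, X a d * X b e * X d b * X e a : U N)
    = c4 + c2 * c1 - nn N * c3 := by
  have hpt : ∀ a b d e : Fin N, X a d * X b e * X d b * X e a
      = X a d * X d b * X b e * X e a + (if e = d then X a d * X b b * X e a else 0)
        - X a d * X d e * X e a := by
    intro a b d e
    have h := X_comm b e d b
    calc X a d * X b e * X d b * X e a = X a d * (X b e * X d b) * X e a := by noncomm_ring
      _ = _ := by rw [h]; simp only [eq_self_iff_true, if_true]; split_ifs <;> noncomm_ring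
  simp only [hpt]
  simp only [Finset.sum_add_distrib, Finset.sum_sub_distrib, Finset.sum_ite_irrel,
    Finset.sum_const_zero, Finset.sum_ite_eq, Finset.sum_ite_eq', Finset.mem_univ, if_true,
    Finset.sum_const, Finset.card_univ, Fintype.card_fin, nsmul_eq_mul]
  rw [W4c4, B3a]
  simp only [← Finset.mul_sum]
  rw [mnn, mc3]

lemma U4L : (∑ a, ∑ c, ∑ d, ∑ e, X a d * X d e * X c a * X e c : U N)
    = c4 + c2 * c1 - nn N * c3 := by
  have hpt : ∀ a c d e : Fin N, X a d * X d e * X c a * X e c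
      = X a d * X d e * X e c * X c a + (if a = e then X a d * X d e * X c c else 0)
        - X a d * X d e * X e a := by
    intro a c d e
    have h := X_comm c a e c
    calc X a d * X d e * X c a * X e c = X a d * X d e * (X c a * X e c) := by noncomm_ring
      _ = _ := by rw [h]; simp only [eq_self_iff_true, if_true]; split_ifs <;> noncomm_ring
  simp only [hpt]
  simp only [Finset.sum_add_distrib, Finset.sum_sub_distrib, Finset.sum_ite_irrel,
    Finset.sum_const_zero, Finset.sum_ite_eq, Finset.sum_ite_eq', Finset.mem_univ, if_true,
    Finset.sum_const, Finset.card_univ, Fintype.card_fin, nsmul_eq_mul]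
  rw [U4c4, B3e]
  simp only [← Finset.mul_sum]
  rw [mnn, mc3]

lemma V4mL : (∑ a, ∑ c, ∑ d, ∑ e, X a d * X c e * X d c * X e a : U N)
    = c4 + c2 * c1 - nn N * c3 := by
  have hpt : ∀ a c d e : Fin N, X a d * X c e * X d c * X e a
      = X a d * X d c * X c e * X e a + (if e = d then X a d * X c c * X e a else 0)
        - X a d * X d e * X e a := by
    intro a c d e
    have h := X_comm c e d c
    calc X a d * X c e * X d c * X e a = X a d * (X c e * X d c) * X e a := by noncomm_ring
      _ = _ := by rw [h]; simp only [eq_self_iff_true, if_true]; split_ifs <;> noncomm_ring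
  simp only [hpt]
  simp only [Finset.sum_add_distrib, Finset.sum_sub_distrib, Finset.sum_ite_irrel,
    Finset.sum_const_zero, Finset.sum_ite_eq, Finset.sum_ite_eq', Finset.mem_univ, if_true,
    Finset.sum_const, Finset.card_univ, Fintype.card_fin, nsmul_eq_mul]
  rw [V4c4, B3a]
  simp only [← Finset.mul_sum]
  rw [mnn, mc3]

lemma V4L : (∑ a, ∑ c, ∑ d, ∑ e, X a d * X c e * X e a * X d c : U N)
    = c4 + c1 * c2 - nn N * c3 := by
  have hpt : ∀ a c d e : Fin N, X a d * X c e * X e a * X d c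
      = X a d * X c e * X d c * X e a + (if a = d then X a d * X c e * X e c else 0)
        - (if c = e then X a d * X c e * X d a else 0) := by
    intro a c d e
    have h := X_comm e a d c
    calc X a d * X c e * X e a * X d c = X a d * X c e * (X e a * X d c) := by noncomm_ring
      _ = _ := by rw [h]; split_ifs <;> noncomm_ring
  simp only [hpt]
  simp only [Finset.sum_add_distrib, Finset.sum_sub_distrib, Finset.sum_ite_irrel,
    Finset.sum_const_zero, Finset.sum_ite_eq, Finset.sum_ite_eq', Finset.mem_univ, if_true]
  rw [V4mL, B1, B3a]
  abel

lemma S4mL : (∑ a, ∑ b, ∑ d, ∑ f, X a d * X d f * X b a * X f b : U N)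
    = c4 + c2 * c1 - nn N * c3 := by
  have hpt : ∀ a b d f : Fin N, X a d * X d f * X b a * X f b
      = X a d * X d f * X f b * X b a + (if a = f then X a d * X d f * X b b else 0)
        - X a d * X d f * X f a := by
    intro a b d f
    have h := X_comm b a f b
    calc X a d * X d f * X b a * X f b = X a d * X d f * (X b a * X f b) := by noncomm_ring
      _ = _ := by rw [h]; simp only [eq_self_iff_true, if_true]; split_ifs <;> noncomm_ring
  simp only [hpt]
  simp only [Finset.sum_add_distrib, Finset.sum_sub_distrib, Finset.sum_ite_irrel,
    Finset.sum_const_zero, Finset.sum_ite_eq, Finset.sum_ite_eq', Finset.mem_univ, if_true,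
    Finset.sum_const, Finset.card_univ, Fintype.card_fin, nsmul_eq_mul]
  rw [S4c4, B3e]
  simp only [← Finset.mul_sum]
  rw [mnn, mc3]

lemma S4L : (∑ a, ∑ b, ∑ d, ∑ f, X a d * X b a * X d f * X f b : U N)
    = c4 + c1 * c2 - nn N * c3 := by
  have hpt : ∀ a b d f : Fin N, X a d * X b a * X d f * X f b
      = X a d * X d f * X b a * X f b + (if a = d then X a d * X b f * X f b else 0)
        - (if f = b then X a d * X d a * X f b else 0) := by
    intro a b d f
    have h := X_comm b a d f
    calc X a d * X b a * X d f * X f b = X a d * (X b a * X d f) * X f b := by noncomm_ring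
      _ = _ := by rw [h]; split_ifs <;> noncomm_ring
  simp only [hpt]
  simp only [Finset.sum_add_distrib, Finset.sum_sub_distrib, Finset.sum_ite_irrel,
    Finset.sum_const_zero, Finset.sum_ite_eq, Finset.sum_ite_eq', Finset.mem_univ, if_true]
  rw [S4mL, B1, B3e]
  abel

lemma R4m2L : (∑ a, ∑ b, ∑ c, ∑ d, X a d * X c b * X d c * X b a : U N)
    = c4 + c2 * c1 - nn N * c3 := by
  have hpt : ∀ a b c d : Fin N, X a d * X c b * X d c * X b a
      = X a d * X d c * X c b * X b a + (if b = d then X a d * X c c * X b a else 0)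
        - X a d * X d b * X b a := by
    intro a b c d
    have h := X_comm c b d c
    calc X a d * X c b * X d c * X b a = X a d * (X c b * X d c) * X b a := by noncomm_ring
      _ = _ := by rw [h]; simp only [eq_self_iff_true, if_true]; split_ifs <;> noncomm_ring
  simp only [hpt]
  simp only [Finset.sum_add_distrib, Finset.sum_sub_distrib, Finset.sum_ite_irrel,
    Finset.sum_const_zero, Finset.sum_ite_eq, Finset.sum_ite_eq', Finset.mem_univ, if_true,
    Finset.sum_const, Finset.card_univ, Fintype.card_fin, nsmul_eq_mul]
  rw [R4c4, B3b]
  simp only [← Finset.mul_sum]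
  rw [mnn, R3a]

lemma R4mainL : (∑ a, ∑ b, ∑ c, ∑ d, X a d * X c b * X b a * X d c : U N)
    = c4 + c1 * c2 - nn N * c3 := by
  have hpt : ∀ a b c d : Fin N, X a d * X c b * X b a * X d c
      = X a d * X c b * X d c * X b a + (if a = d then X a d * X c b * X b c else 0)
        - (if c = b then X a d * X c b * X d a else 0) := by
    intro a b c d
    have h := X_comm b a d c
    calc X a d * X c b * X b a * X d c = X a d * X c b * (X b a * X d c) := by noncomm_ring
      _ = _ := by rw [h]; split_ifs <;> noncomm_ring
  simp only [hpt]
  simp only [Finset.sum_add_distrib, Finset.sum_sub_distrib, Finset.sum_ite_irrel,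
    Finset.sum_const_zero, Finset.sum_ite_eq, Finset.sum_ite_eq', Finset.mem_univ, if_true]
  rw [R4m2L, B3c, B3a]
  abel

lemma R4L : (∑ a, ∑ b, ∑ c, ∑ d, X a d * X b a * X c b * X d c : U N)
    = c4 + c1 * c2 + c2 * c1 - nn N * c3 - nn N * (c3 + c1 * c1 - nn N * c2) := by
  have hpt : ∀ a b c d : Fin N, X a d * X b a * X c b * X d c
      = X a d * X c b * X b a * X d c + (if a = c then X a d * X b b * X d c else 0)
        - X a d * X c a * X d c := by
    intro a b c d
    have h := X_comm b a c b
    calc X a d * X b a * X c b * X d c = X a d * (X b a * X c b) * X d c := by noncomm_ring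
      _ = _ := by rw [h]; simp only [eq_self_iff_true, if_true]; split_ifs <;> noncomm_ring
  simp only [hpt]
  simp only [Finset.sum_add_distrib, Finset.sum_sub_distrib, Finset.sum_ite_irrel,
    Finset.sum_const_zero, Finset.sum_ite_eq, Finset.sum_ite_eq', Finset.mem_univ, if_true,
    Finset.sum_const, Finset.card_univ, Fintype.card_fin, nsmul_eq_mul]
  rw [R4mainL, B3a]
  simp only [← Finset.mul_sum]
  rw [mnn, P3]
  abel


lemma T1bmid : (∑ a, ∑ b, ∑ c, ∑ d, ∑ f, X a d * X b a * X d b * X c f * X f c : U N)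
    = (c3 + c1 * c1 - nn N * c2) * c2 := by
  rw [show (∑ a, ∑ b, ∑ c, ∑ d, ∑ f, X a d * X b a * X d b * X c f * X f c : U N)
      = ∑ a, ∑ b, ∑ d, ∑ c, ∑ f, X a d * X b a * X d b * X c f * X f c from
    sumc fun a => comm4_23 _]
  have key : ∀ a b d : Fin N, (∑ c, ∑ f, X a d * X b a * X d b * X c f * X f c : U N)
      = (X a d * X b a * X d b) * c2 := by
    intro a b d
    rw [← mc2, Finset.mul_sum]
    apply sumc; intro c
    rw [Finset.mul_sum]
    apply sumc; intro f
    noncomm_ring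
  simp only [key]
  simp only [← Finset.sum_mul]
  rw [P3]

lemma T1cmid : (∑ a, ∑ c, ∑ d, ∑ e, ∑ f, X a d * X d e * X e a * X c f * X f c : U N)
    = c3 * c2 := by
  rw [show (∑ a, ∑ c, ∑ d, ∑ e, ∑ f, X a d * X d e * X e a * X c f * X f c : U N)
      = ∑ a, ∑ d, ∑ e, ∑ c, ∑ f, X a d * X d e * X e a * X c f * X f c from
    sumc fun a => by rw [comm4_12, comm4_23]]
  have key : ∀ a d e : Fin N, (∑ c, ∑ f, X a d * X d e * X e a * X c f * X f c : U N)
      = (X a d * X d e * X e a) * c2 := by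
    intro a d e
    rw [← mc2, Finset.mul_sum]
    apply sumc; intro c
    rw [Finset.mul_sum]
    apply sumc; intro f
    noncomm_ring
  simp only [key]
  simp only [← Finset.sum_mul]
  rw [mc3]

lemma T2mid : (∑ a, ∑ b, ∑ c, ∑ d, ∑ e, X a d * X c a * X b e * X e b * X d c : U N)
    = (c3 + c1 * c1 - nn N * c2) * c2 := by
  rw [show (∑ a, ∑ b, ∑ c, ∑ d, ∑ e, X a d * X c a * X b e * X e b * X d c : U N)
      = ∑ a, ∑ c, ∑ d, ∑ b, ∑ e, X a d * X c a * X b e * X e b * X d c from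
    sumc fun a => by rw [comm4_12, comm4_23]]
  have key : ∀ a c d : Fin N, (∑ b, ∑ e, X a d * X c a * X b e * X e b * X d c : U N)
      = (X a d * X c a * X d c) * c2 := by
    intro a c d
    calc (∑ b, ∑ e, X a d * X c a * X b e * X e b * X d c : U N)
        = ∑ b, ∑ e, ((X a d * X c a) * (X b e * X e b)) * X d c :=
          sumc fun b => sumc fun e => by noncomm_ring
      _ = ((X a d * X c a) * c2) * X d c := by
          rw [← mc2]
          simp only [← Finset.sum_mul, ← Finset.mul_sum]
      _ = (X a d * X c a * X d c) * c2 := by rw [mul_assoc, c2X, ← mul_assoc]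
  simp only [key]
  simp only [← Finset.sum_mul]
  rw [P3]

lemma T3mid : (∑ a, ∑ b, ∑ d, ∑ e, ∑ f, X a d * X b e * X e b * X d f * X f a : U N)
    = c3 * c2 := by
  rw [show (∑ a, ∑ b, ∑ d, ∑ e, ∑ f, X a d * X b e * X e b * X d f * X f a : U N)
      = ∑ a, ∑ d, ∑ f, ∑ b, ∑ e, X a d * X b e * X e b * X d f * X f a from by
    rw [show (∑ a, ∑ b, ∑ d, ∑ e, ∑ f, X a d * X b e * X e b * X d f * X f a : U N)
        = ∑ a, ∑ d, ∑ b, ∑ e, ∑ f, X a d * X b e * X e b * X d f * X f a from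
      sumc fun a => comm4_12 _]
    exact sumc fun a => sumc fun d => comm3_l _]
  have key : ∀ a d f : Fin N, (∑ b, ∑ e, X a d * X b e * X e b * X d f * X f a : U N)
      = (X a d * X d f * X f a) * c2 := by
    intro a d f
    calc (∑ b, ∑ e, X a d * X b e * X e b * X d f * X f a : U N)
        = ∑ b, ∑ e, (X a d * (X b e * X e b)) * (X d f * X f a) :=
          sumc fun b => sumc fun e => by noncomm_ring
      _ = (X a d * c2) * (X d f * X f a) := by
          rw [← mc2]
          simp only [← Finset.sum_mul, ← Finset.mul_sum]
      _ = (X a d * X d f * X f a) * c2 := by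
          rw [mul_assoc, c2XX, ← mul_assoc, ← mul_assoc]
  simp only [key]
  simp only [← Finset.sum_mul]
  rw [mc3]

lemma T1apull :
    (∑ a, ∑ b, ∑ c, ∑ d, ∑ e, ∑ f, X a d * X d a * X b e * X c f * X e b * X f c : U N)
    = c2 * (c2 * c2 + c1 * c1 - nn N * c2) := by
  rw [show (∑ a, ∑ b, ∑ c, ∑ d, ∑ e, ∑ f,
        X a d * X d a * X b e * X c f * X e b * X f c : U N)
      = ∑ a, ∑ d, ∑ b, ∑ c, ∑ e, ∑ f, X a d * X d a * X b e * X c f * X e b * X f c from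
    sumc fun a => comm3_l _]
  have key : ∀ a d : Fin N,
      (∑ b, ∑ c, ∑ e, ∑ f, X a d * X d a * X b e * X c f * X e b * X f c : U N)
      = (X a d * X d a) * (∑ b, ∑ c, ∑ e, ∑ f, X b e * (X c f * (X e b * X f c))) := by
    intro a d
    have k1 : ∀ b c e f : Fin N, X a d * X d a * X b e * X c f * X e b * X f c
        = (X a d * X d a) * (X b e * (X c f * (X e b * X f c))) := by
      intros; noncomm_ring
    simp only [k1, ← Finset.mul_sum]
  simp only [key]
  simp only [← Finset.sum_mul]
  rw [mc2, K2s]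


lemma T1bL : (∑ a, ∑ b, ∑ c, ∑ d, ∑ f, X a d * X b a * X c f * X d b * X f c : U N)
    = (c3 + c1 * c1 - nn N * c2) * c2
      + (c4 + c1 * c2 + c2 * c1 - nn N * c3 - nn N * (c3 + c1 * c1 - nn N * c2))
      - (c4 + c1 * c2 - nn N * c3) := by
  have hpt : ∀ a b c d f : Fin N, X a d * X b a * X c f * X d b * X f c
      = X a d * X b a * X d b * X c f * X f c
        + (if f = d then X a d * X b a * X c b * X f c else 0)
        - (if b = c then X a d * X b a * X d f * X f c else 0) := by
    intro a b c d f
    have h := X_comm c f d b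
    calc X a d * X b a * X c f * X d b * X f c
        = X a d * X b a * (X c f * X d b) * X f c := by noncomm_ring
      _ = _ := by rw [h]; split_ifs <;> noncomm_ring
  simp only [hpt]
  simp only [Finset.sum_add_distrib, Finset.sum_sub_distrib, Finset.sum_ite_irrel,
    Finset.sum_const_zero, Finset.sum_ite_eq, Finset.sum_ite_eq', Finset.mem_univ, if_true]
  rw [T1bmid, R4L, S4L]

lemma T1cL : (∑ a, ∑ c, ∑ d, ∑ e, ∑ f, X a d * X d e * X c f * X e a * X f c : U N)
    = c3 * c2 + (c4 + c2 * c1 - nn N * c3) - c4 := by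
  have hpt : ∀ a c d e f : Fin N, X a d * X d e * X c f * X e a * X f c
      = X a d * X d e * X e a * X c f * X f c
        + (if f = e then X a d * X d e * X c a * X f c else 0)
        - (if a = c then X a d * X d e * X e f * X f c else 0) := by
    intro a c d e f
    have h := X_comm c f e a
    calc X a d * X d e * X c f * X e a * X f c
        = X a d * X d e * (X c f * X e a) * X f c := by noncomm_ring
      _ = _ := by rw [h]; split_ifs <;> noncomm_ring
  simp only [hpt]
  simp only [Finset.sum_add_distrib, Finset.sum_sub_distrib, Finset.sum_ite_irrel,
    Finset.sum_const_zero, Finset.sum_ite_eq, Finset.sum_ite_eq', Finset.mem_univ, if_true]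
  rw [T1cmid, U4L, mc4]

lemma T2L : (∑ a, ∑ b, ∑ c, ∑ d, ∑ e, X a d * X b e * X c a * X e b * X d c : U N)
    = (c3 + c1 * c1 - nn N * c2) * c2
      + (c4 + c1 * c2 + c2 * c1 - nn N * c3 - nn N * (c3 + c1 * c1 - nn N * c2))
      - (c4 + c1 * c2 - nn N * c3) := by
  have hpt : ∀ a b c d e : Fin N, X a d * X b e * X c a * X e b * X d c
      = X a d * X c a * X b e * X e b * X d c
        + (if e = c then X a d * X b a * X e b * X d c else 0)
        - (if a = b then X a d * X c e * X e b * X d c else 0) := by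
    intro a b c d e
    have h := X_comm b e c a
    calc X a d * X b e * X c a * X e b * X d c
        = X a d * (X b e * X c a) * X e b * X d c := by noncomm_ring
      _ = _ := by rw [h]; split_ifs <;> noncomm_ring
  simp only [hpt]
  simp only [Finset.sum_add_distrib, Finset.sum_sub_distrib, Finset.sum_ite_irrel,
    Finset.sum_const_zero, Finset.sum_ite_eq, Finset.sum_ite_eq', Finset.mem_univ, if_true]
  rw [T2mid, R4L, V4L]

lemma T3L : (∑ a, ∑ b, ∑ d, ∑ e, ∑ f, X a d * X b e * X d f * X e b * X f a : U N)
    = c3 * c2 + (c4 + c2 * c1 - nn N * c3) - c4 := by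
  have hpt : ∀ a b d e f : Fin N, X a d * X b e * X d f * X e b * X f a
      = X a d * X b e * X e b * X d f * X f a
        + (if f = e then X a d * X b e * X d b * X f a else 0)
        - (if b = d then X a d * X b e * X e f * X f a else 0) := by
    intro a b d e f
    have h := X_comm d f e b
    calc X a d * X b e * X d f * X e b * X f a
        = X a d * X b e * (X d f * X e b) * X f a := by noncomm_ring
      _ = _ := by rw [h]; split_ifs <;> noncomm_ring
  simp only [hpt]
  simp only [Finset.sum_add_distrib, Finset.sum_sub_distrib, Finset.sum_ite_irrel,
    Finset.sum_const_zero, Finset.sum_ite_eq, Finset.sum_ite_eq', Finset.mem_univ, if_true]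
  rw [T3mid, W4L, mc4]

lemma T1L :
    (∑ a, ∑ b, ∑ c, ∑ d, ∑ e, ∑ f, X a d * X b e * X d a * X c f * X e b * X f c : U N)
    = c2 * (c2 * c2 + c1 * c1 - nn N * c2)
      + ((c3 + c1 * c1 - nn N * c2) * c2
        + (c4 + c1 * c2 + c2 * c1 - nn N * c3 - nn N * (c3 + c1 * c1 - nn N * c2))
        - (c4 + c1 * c2 - nn N * c3))
      - (c3 * c2 + (c4 + c2 * c1 - nn N * c3) - c4) := by
  have hpt : ∀ a b c d e f : Fin N, X a d * X b e * X d a * X c f * X e b * X f c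
      = X a d * X d a * X b e * X c f * X e b * X f c
        + (if e = d then X a d * X b a * X c f * X e b * X f c else 0)
        - (if a = b then X a d * X d e * X c f * X e b * X f c else 0) := by
    intro a b c d e f
    have h := X_comm b e d a
    calc X a d * X b e * X d a * X c f * X e b * X f c
        = X a d * (X b e * X d a) * X c f * X e b * X f c := by noncomm_ring
      _ = _ := by rw [h]; split_ifs <;> noncomm_ring
  simp only [hpt]
  simp only [Finset.sum_add_distrib, Finset.sum_sub_distrib, Finset.sum_ite_irrel,
    Finset.sum_const_zero, Finset.sum_ite_eq, Finset.sum_ite_eq', Finset.mem_univ, if_true]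
  rw [T1apull, T1bL, T1cL]

lemma TL :
    (∑ a, ∑ b, ∑ c, ∑ d, ∑ e, ∑ f, X a d * X b e * X c f * X d a * X e b * X f c : U N)
    = (c2 * (c2 * c2 + c1 * c1 - nn N * c2)
        + ((c3 + c1 * c1 - nn N * c2) * c2
          + (c4 + c1 * c2 + c2 * c1 - nn N * c3 - nn N * (c3 + c1 * c1 - nn N * c2))
          - (c4 + c1 * c2 - nn N * c3))
        - (c3 * c2 + (c4 + c2 * c1 - nn N * c3) - c4))
      + ((c3 + c1 * c1 - nn N * c2) * c2
        + (c4 + c1 * c2 + c2 * c1 - nn N * c3 - nn N * (c3 + c1 * c1 - nn N * c2))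
        - (c4 + c1 * c2 - nn N * c3))
      - (c3 * c2 + (c4 + c2 * c1 - nn N * c3) - c4) := by
  have hpt : ∀ a b c d e f : Fin N, X a d * X b e * X c f * X d a * X e b * X f c
      = X a d * X b e * X d a * X c f * X e b * X f c
        + (if f = d then X a d * X b e * X c a * X e b * X f c else 0)
        - (if a = c then X a d * X b e * X d f * X e b * X f c else 0) := by
    intro a b c d e f
    have h := X_comm c f d a
    calc X a d * X b e * X c f * X d a * X e b * X f c
        = X a d * X b e * (X c f * X d a) * X e b * X f c := by noncomm_ring
      _ = _ := by rw [h]; split_ifs <;> noncomm_ring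
  simp only [hpt]
  simp only [Finset.sum_add_distrib, Finset.sum_sub_distrib, Finset.sum_ite_irrel,
    Finset.sum_const_zero, Finset.sum_ite_eq, Finset.sum_ite_eq', Finset.mem_univ, if_true]
  rw [T1L, T2L, T3L]


lemma final : (c2 * (c2 * c2 + c1 * c1 - nn N * c2)
        + ((c3 + c1 * c1 - nn N * c2) * c2
          + (c4 + c1 * c2 + c2 * c1 - nn N * c3 - nn N * (c3 + c1 * c1 - nn N * c2))
          - (c4 + c1 * c2 - nn N * c3))
        - (c3 * c2 + (c4 + c2 * c1 - nn N * c3) - c4))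
      + ((c3 + c1 * c1 - nn N * c2) * c2
        + (c4 + c1 * c2 + c2 * c1 - nn N * c3 - nn N * (c3 + c1 * c1 - nn N * c2))
        - (c4 + c1 * c2 - nn N * c3))
      - (c3 * c2 + (c4 + c2 * c1 - nn N * c3) - c4)
    = 2 * c2 * (nn N) ^ 2 - (2 * c1 ^ 2 + 3 * c2 ^ 2) * nn N + c2 ^ 3
      + 3 * c1 ^ 2 * c2 := by
  have c21 : (c2 : U N) * c1 = c1 * c2 := c12.symm
  have c21' : ∀ x : U N, c2 * (c1 * x) = c1 * (c2 * x) := fun x => by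
    rw [← mul_assoc, c21, mul_assoc]
  have n1 : ∀ x : U N, x * nn N = nn N * x := nnc
  have n1' : ∀ x y : U N, x * (nn N * y) = nn N * (x * y) := fun x y => by
    rw [← mul_assoc, n1, mul_assoc]
  have h3 : ∀ x : U N, (3 : U N) * x = x + x + x := fun x => by
    rw [show (3 : U N) = 2 + 1 by norm_num, add_mul, two_mul, one_mul]
  simp only [pow_succ, pow_zero, one_mul, mul_one, two_mul, h3, mul_add, mul_sub,
    add_mul, sub_mul, mul_assoc, c21, c21', n1, n1']
  abel

end WK3

/-- `w_{gl_N}(K_3) = 2·C_2·N² − (2·C_1² + 3·C_2²)·N + C_2³ + 3·C_1²·C_2`. -/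
theorem wgl_K3 (N : ℕ) (hN : 1 ≤ N) :
    let NN : UniversalEnvelopingAlgebra ℂ (gl N) := (N : ℕ)
    let C1 := casimir N 1
    let C2 := casimir N 2
    wgl N (3 + 3) (Kperm 3) =
      2 * C2 * NN ^ 2 - (2 * C1 ^ 2 + 3 * C2 ^ 2) * NN + C2 ^ 3 + 3 * C1 ^ 2 * C2 := by
  show wgl N (3 + 3) (Kperm 3)
      = 2 * casimir N 2 * (WK3.nn N) ^ 2
        - (2 * (casimir N 1) ^ 2 + 3 * (casimir N 2) ^ 2) * WK3.nn N
        + (casimir N 2) ^ 3 + 3 * (casimir N 1) ^ 2 * casimir N 2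
  rw [WK3.wgl6, WK3.casimir1, WK3.casimir2, WK3.mc1, WK3.mc2, WK3.TL, WK3.final]
end
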